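/- arXiv:0712.3681 — 7 statements merged into one kernel-verified Lean document; each statement's English description precedes it below -/
import Mathlib

section
/- Let Z be a real random variable and x > 0. Then x²·P[|Z| > x] + E[Z²·1_{|Z| ≤ x}] = 2·∫₀ˣ y·P[|Z| > y] dy. -/
open MeasureTheory Filter Set ProbabilityTheory

variable {Ω : Type*} [MeasurableSpace Ω]

/-- The σ-field generated by the random variables `X i`, `i ∈ s`. -/
def blockS (X : ℕ → Ω → ℝ) (s : Set ℕ) : MeasurableSpace Ω :=
  ⨆ i ∈ s, MeasurableSpace.comap (X i) (inferInstance : MeasurableSpace ℝ)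

/-- The set of ratios `P(A∩B)/(P(A)P(B))` over `A ∈ σ(X_1,…,X_k)`,
`B ∈ σ(X_{k+m}, X_{k+m+1}, …)`, `P(A)P(B) > 0`. -/
noncomputable def psiRatioSet (P : Measure Ω) (X : ℕ → Ω → ℝ) (m : ℕ) : Set ℝ :=
  {r | ∃ k ≥ 1, ∃ A B : Set Ω,
    MeasurableSet[blockS X (Set.Icc 1 k)] A ∧ MeasurableSet[blockS X (Set.Ici (k + m))] B ∧
    0 < (P A).toReal * (P B).toReal ∧
    r = (P (A ∩ B)).toReal / ((P A).toReal * (P B).toReal)}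

/-- Upper ψ-mixing coefficient `ψ*_m`. -/
noncomputable def psiStar (P : Measure Ω) (X : ℕ → Ω → ℝ) (m : ℕ) : ℝ :=
  sSup (psiRatioSet P X m)

/-- Lower ψ-mixing coefficient `ψ'_m`. -/
noncomputable def psiPrime (P : Measure Ω) (X : ℕ → Ω → ℝ) (m : ℕ) : ℝ :=
  sInf (psiRatioSet P X m)

/-- ψ-mixing coefficient `ψ_m`. -/
noncomputable def psiCoef (P : Measure Ω) (X : ℕ → Ω → ℝ) (m : ℕ) : ℝ :=
  sSup ((fun r => |r - 1|) '' psiRatioSet P X m)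

/-- φ-mixing coefficient `φ_m`. -/
noncomputable def phiCoef (P : Measure Ω) (X : ℕ → Ω → ℝ) (m : ℕ) : ℝ :=
  sSup {r | ∃ k ≥ 1, ∃ A B : Set Ω,
    MeasurableSet[blockS X (Set.Icc 1 k)] A ∧ MeasurableSet[blockS X (Set.Ici (k + m))] B ∧
    0 < (P A).toReal ∧
    r = |(P (A ∩ B)).toReal / (P A).toReal - (P B).toReal|}

/-- ρ-mixing (maximal correlation) coefficient `ρ_m`. -/
noncomputable def rhoCoef (P : Measure Ω) (X : ℕ → Ω → ℝ) (m : ℕ) : ℝ :=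
  sSup {r | ∃ k ≥ 1, ∃ f g : Ω → ℝ,
    Measurable[blockS X (Set.Icc 1 k)] f ∧ Measurable[blockS X (Set.Ici (k + m))] g ∧
    MemLp f 2 P ∧ MemLp g 2 P ∧ 0 < variance f P ∧ 0 < variance g P ∧
    r = |(∫ ω, f ω * g ω ∂P) - (∫ ω, f ω ∂P) * (∫ ω, g ω ∂P)| /
      (Real.sqrt (variance f P) * Real.sqrt (variance g P))}

/-- Strict stationarity of the sequence `X_1, X_2, …` (shift invariance of the law of
the whole sequence). -/
def Stationary (P : Measure Ω) (X : ℕ → Ω → ℝ) : Prop :=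
  Measure.map (fun ω => fun i : ℕ => X (i + 2) ω) P =
    Measure.map (fun ω => fun i : ℕ => X (i + 1) ω) P

/-- Partial sums `S_n = X_1 + ⋯ + X_n`. -/
noncomputable def pSum (X : ℕ → Ω → ℝ) (n : ℕ) (ω : Ω) : ℝ := ∑ k ∈ Finset.Icc 1 n, X k ω

/-- Convergence to `0` in probability. -/
def TendstoInP (P : Measure Ω) (Y : ℕ → Ω → ℝ) : Prop :=
  ∀ ε > 0, Tendsto (fun n => (P {ω | ε < |Y n ω|}).toReal) atTop (nhds 0)

/-- A function is slowly varying in the sense of Karamata. -/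
def SlowlyVarying (L : ℝ → ℝ) : Prop :=
  ∀ l > 0, Tendsto (fun x => L (l * x) / L x) atTop (nhds 1)

/-! Both sides equal `E[min(Z², x²)]`: splitting this expectation on `{|Z| ≤ x}` gives the left
side, while the layer-cake formula gives `∫₀^{x²} P(Z² > t) dt`, which the substitution `t = y²`
turns into the right side. -/

namespace MeasureTheory

variable {α : Type*} [MeasurableSpace α] {μ : Measure α} {f : α → ℝ} {c : ℝ}

lemma Integrable.integral_eq_integral_Ioo_meas_lt (f_intble : Integrable f μ)
    (f_nn : 0 ≤ᵐ[μ] f) (f_bdd : f ≤ᵐ[μ] fun _ ↦ c) :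
    ∫ ω, f ω ∂μ = ∫ t in Ioo 0 c, μ.real {ω | t < f ω} := by
  rw [f_intble.integral_eq_integral_meas_lt f_nn,
    setIntegral_eq_of_subset_of_ae_sdiff_eq_zero nullMeasurableSet_Ioi Ioo_subset_Ioi_self]
  refine Eventually.of_forall fun t ht ↦ ?_
  have hct : c ≤ t := not_lt.mp fun htc ↦ ht.2 ⟨ht.1, htc⟩
  have hnull : μ {ω | c < f ω} = 0 := by
    rw [measure_eq_zero_iff_ae_notMem]
    filter_upwards [f_bdd] with ω hω using not_lt.mpr hω
  have hsub : {ω | t < f ω} ⊆ {ω | c < f ω} := fun ω hω ↦ hct.trans_lt hω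
  rw [measureReal_def, measure_mono_null hsub hnull, ENNReal.toReal_zero]

lemma integrable_min_const [IsFiniteMeasure μ] (hf : Measurable f) (f_nn : 0 ≤ f) (hc : 0 ≤ c) :
    Integrable (fun ω ↦ min (f ω) c) μ :=
  Integrable.of_bound (C := c) (hf.min measurable_const).aestronglyMeasurable <|
    Eventually.of_forall fun ω ↦ by
      rw [Real.norm_of_nonneg (le_min (f_nn ω) hc)]
      exact min_le_right _ _

lemma integral_min_const_eq_integral_Ioo_meas_lt [IsFiniteMeasure μ] (hf : Measurable f)
    (f_nn : 0 ≤ f) (hc : 0 ≤ c) :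
    ∫ ω, min (f ω) c ∂μ = ∫ t in Ioo 0 c, μ.real {ω | t < f ω} := by
  rw [(integrable_min_const hf f_nn hc).integral_eq_integral_Ioo_meas_lt
    (Eventually.of_forall fun ω ↦ le_min (f_nn ω) hc)
    (Eventually.of_forall fun ω ↦ min_le_right _ _)]
  refine setIntegral_congr_fun measurableSet_Ioo fun t ht ↦ ?_
  simp only [lt_min_iff, ht.2, and_true]

lemma integral_min_const_eq_setIntegral_add (hf : Measurable f)
    (hint : Integrable (fun ω ↦ min (f ω) c) μ) :
    ∫ ω, min (f ω) c ∂μ = ∫ ω in {ω | f ω ≤ c}, f ω ∂μ + c * μ.real {ω | c < f ω} := by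
  have hle : MeasurableSet {ω | f ω ≤ c} := measurableSet_le hf measurable_const
  have hlt : MeasurableSet {ω | c < f ω} := measurableSet_lt measurable_const hf
  have hcompl : {ω | f ω ≤ c}ᶜ = {ω | c < f ω} := by ext; simp
  rw [← integral_add_compl hle hint, hcompl,
    setIntegral_congr_fun hle fun ω hω ↦ min_eq_left hω,
    setIntegral_congr_fun hlt fun ω hω ↦ min_eq_right hω.le,
    setIntegral_const, smul_eq_mul, mul_comm]

end MeasureTheory

lemma integral_Ioo_comp_sq {E : Type*} [NormedAddCommGroup E] [NormedSpace ℝ E]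
    (g : ℝ → E) {x : ℝ} (hx : 0 ≤ x) :
    ∫ t in Ioo 0 (x ^ 2), g t = ∫ y in Ioo 0 x, (2 * y) • g (y ^ 2) := by
  have hmono : StrictMonoOn (· ^ 2 : ℝ → ℝ) (Icc 0 x) :=
    (pow_left_strictMonoOn₀ two_ne_zero).mono fun y hy ↦ hy.1
  have himage : (· ^ 2 : ℝ → ℝ) '' Ioo 0 x = Ioo 0 (x ^ 2) := by
    rw [(continuous_pow 2).continuousOn.image_Ioo_of_strictMonoOn hx hmono, zero_pow two_ne_zero]
  rw [← himage, integral_image_eq_integral_abs_deriv_smul measurableSet_Ioo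
    (fun y _ ↦ by simpa using (hasDerivAt_pow 2 y).hasDerivWithinAt)
    (hmono.injOn.mono Ioo_subset_Icc_self)]
  refine setIntegral_congr_fun measurableSet_Ioo fun y hy ↦ ?_
  rw [abs_of_pos (by linarith [hy.1])]

theorem stmt0 (P : Measure Ω) [IsProbabilityMeasure P] (Z : Ω → ℝ) (hZ : Measurable Z)
    (x : ℝ) (hx : 0 < x) :
    x ^ 2 * (P {ω | x < |Z ω|}).toReal + ∫ ω in {ω | |Z ω| ≤ x}, (Z ω) ^ 2 ∂P =
      2 * ∫ y in Set.Ioc 0 x, y * (P {ω | y < |Z ω|}).toReal := by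
  have hZ2 : Measurable fun ω ↦ Z ω ^ 2 := hZ.pow_const 2
  have hZ2_nn : 0 ≤ fun ω ↦ Z ω ^ 2 := fun ω ↦ sq_nonneg (Z ω)
  have hx2 : 0 ≤ x ^ 2 := sq_nonneg x
  calc x ^ 2 * (P {ω | x < |Z ω|}).toReal + ∫ ω in {ω | |Z ω| ≤ x}, (Z ω) ^ 2 ∂P
      = ∫ ω, min (Z ω ^ 2) (x ^ 2) ∂P := by
        rw [integral_min_const_eq_setIntegral_add hZ2 (integrable_min_const hZ2 hZ2_nn hx2)]
        simp only [sq_le_sq, sq_lt_sq, abs_of_pos hx, measureReal_def]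
        ring
    _ = ∫ t in Ioo 0 (x ^ 2), P.real {ω | t < Z ω ^ 2} :=
        integral_min_const_eq_integral_Ioo_meas_lt hZ2 hZ2_nn hx2
    _ = ∫ y in Ioo 0 x, 2 * (y * (P {ω | y < |Z ω|}).toReal) := by
        rw [integral_Ioo_comp_sq _ hx.le]
        refine setIntegral_congr_fun measurableSet_Ioo fun y hy ↦ ?_
        simp only [sq_lt_sq, abs_of_pos hy.1, measureReal_def, smul_eq_mul]
        ring
    _ = 2 * ∫ y in Set.Ioc 0 x, y * (P {ω | y < |Z ω|}).toReal := by
        rw [integral_const_mul, integral_Ioc_eq_integral_Ioo]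
end

section
/- Let Z be a real random variable, c_n → ∞ a sequence of positive reals. Then the two conditions (i) n·P[|Z| > c_n] → 0 and n·c_n⁻²·E[Z²·1_{|Z| ≤ c_n}] → 0 hold simultaneously if and only if ∫₀¹ n·P[|Z| > √x · c_n] dx → 0 as n → ∞. -/
open MeasureTheory Filter Set ProbabilityTheory

variable {Ω : Type*} [MeasurableSpace Ω]

/-
With `W = min (Z² / c²) 1 ∈ [0, 1]`, the layer-cake formula gives
`∫₀¹ P[√x · c < |Z|] dx = E W`, since `x < W` iff `√x · c < |Z|` for `0 < x < 1`.
Splitting `E W` over `{|Z| ≤ c}` and its complement yields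
`E W = c⁻² E[Z² 1_{|Z| ≤ c}] + P[|Z| > c]`. Multiplying by `n`, the integral in the theorem
is the sum of the two nonnegative sequences of condition (i), and a sum of nonnegative
sequences tends to `0` iff both summands do.
-/

theorem Filter.Tendsto.nhds_zero_and_of_add_of_nonneg {α : Type*} {l : Filter α}
    {f g : α → ℝ} (hf : 0 ≤ f) (hg : 0 ≤ g) (h : Tendsto (f + g) l (nhds 0)) :
    Tendsto f l (nhds 0) ∧ Tendsto g l (nhds 0) :=
  ⟨squeeze_zero hf (fun a => le_add_of_nonneg_right (hg a)) h,
    squeeze_zero hg (fun a => le_add_of_nonneg_left (hf a)) h⟩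

theorem MeasureTheory.Integrable.integral_eq_integral_Ioo_meas_lt_s1 {α : Type*}
    [MeasurableSpace α] {μ : Measure α} {f : α → ℝ} {M : ℝ} (f_intble : Integrable f μ)
    (f_nn : 0 ≤ᵐ[μ] f) (f_bdd : f ≤ᵐ[μ] fun _ => M) :
    ∫ a, f a ∂μ = ∫ t in Ioo 0 M, μ.real {a | t < f a} := by
  rw [f_intble.integral_eq_integral_meas_lt f_nn,
    setIntegral_eq_of_subset_of_ae_sdiff_eq_zero nullMeasurableSet_Ioi Ioo_subset_Ioi_self]
  refine Eventually.of_forall fun t ht => ?_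
  have hMt : M ≤ t := by simp_all
  rw [measureReal_def, ENNReal.toReal_eq_zero_iff, measure_eq_zero_iff_ae_notMem]
  exact Or.inl (by filter_upwards [f_bdd] with a ha using not_lt.mpr (ha.trans hMt))

theorem Real.sqrt_mul_lt_abs_iff_lt_min {t c z : ℝ} (hc : 0 < c) (ht₀ : 0 < t) (ht₁ : t < 1) :
    √t * c < |z| ↔ t < min (z ^ 2 / c ^ 2) 1 := by
  have hsq : (√t * c) ^ 2 = t * c ^ 2 := by rw [mul_pow, Real.sq_sqrt ht₀.le]
  rw [lt_min_iff, lt_div_iff₀ (by positivity), ← hsq, ← sq_abs z,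
    pow_lt_pow_iff_left₀ (by positivity) (abs_nonneg z) two_ne_zero]
  exact (and_iff_left ht₁).symm

section TruncatedSecondMoment

variable {P : Measure Ω} [IsFiniteMeasure P] {Z : Ω → ℝ} {c : ℝ}

theorem integrable_min_sq_div_sq_one (hZ : Measurable Z) :
    Integrable (fun ω => min (Z ω ^ 2 / c ^ 2) 1) P :=
  (integrable_const 1).mono'
    (((hZ.pow_const 2).div_const _).min measurable_const).aestronglyMeasurable
    (ae_of_all _ fun ω => by
      rw [Real.norm_of_nonneg (le_min (by positivity) zero_le_one)]; exact min_le_right _ _)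

theorem integral_min_sq_div_sq_one (hZ : Measurable Z) (hc : 0 < c) :
    ∫ ω, min (Z ω ^ 2 / c ^ 2) 1 ∂P =
      (c ^ 2)⁻¹ * ∫ ω in {ω | |Z ω| ≤ c}, Z ω ^ 2 ∂P + P.real {ω | c < |Z ω|} := by
  have hA : MeasurableSet {ω | |Z ω| ≤ c} := measurableSet_le hZ.abs measurable_const
  have hcompl : {ω | |Z ω| ≤ c}ᶜ = {ω | c < |Z ω|} := by ext; simp
  rw [← integral_add_compl hA (integrable_min_sq_div_sq_one hZ), hcompl, ← integral_const_mul]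
  congr 1
  · refine setIntegral_congr_fun hA fun ω (hω : |Z ω| ≤ c) => ?_
    have hsq : Z ω ^ 2 ≤ c ^ 2 := sq_le_sq.mpr (by rw [abs_of_pos hc]; exact hω)
    rw [min_eq_left ((div_le_one (by positivity)).mpr hsq)]
    ring
  · rw [← mul_one (P.real _), ← smul_eq_mul, ← setIntegral_const]
    refine setIntegral_congr_fun (measurableSet_lt measurable_const hZ.abs)
      fun ω (hω : c < |Z ω|) => min_eq_right ((one_le_div (by positivity)).mpr ?_)
    exact sq_le_sq.mpr (by rw [abs_of_pos hc]; exact hω.le)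

theorem setIntegral_Ioo_measureReal_sqrt_mul_lt_abs (hZ : Measurable Z) (hc : 0 < c) :
    ∫ t in Ioo 0 1, P.real {ω | √t * c < |Z ω|} =
      (c ^ 2)⁻¹ * ∫ ω in {ω | |Z ω| ≤ c}, Z ω ^ 2 ∂P + P.real {ω | c < |Z ω|} := by
  rw [← integral_min_sq_div_sq_one hZ hc,
    (integrable_min_sq_div_sq_one hZ).integral_eq_integral_Ioo_meas_lt_s1
      (ae_of_all _ fun ω => le_min (by positivity) zero_le_one)
      (ae_of_all _ fun ω => min_le_right _ _)]
  refine setIntegral_congr_fun measurableSet_Ioo fun t ht => ?_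
  simp only [Real.sqrt_mul_lt_abs_iff_lt_min hc ht.1 ht.2]

end TruncatedSecondMoment

theorem stmt1_general (P : Measure Ω) [IsProbabilityMeasure P] (Z : Ω → ℝ) (hZ : Measurable Z)
    (c : ℕ → ℝ) (hc : ∀ n, 0 < c n) :
    (Tendsto (fun n : ℕ => (n : ℝ) * (P {ω | c n < |Z ω|}).toReal) atTop (nhds 0) ∧
      Tendsto (fun n : ℕ =>
        (n : ℝ) / (c n) ^ 2 * ∫ ω in {ω | |Z ω| ≤ c n}, (Z ω) ^ 2 ∂P) atTop (nhds 0)) ↔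
    Tendsto (fun n : ℕ =>
      ∫ x in Set.Ioc (0:ℝ) 1, (n : ℝ) * (P {ω | Real.sqrt x * c n < |Z ω|}).toReal)
      atTop (nhds 0) := by
  have split : ∀ n : ℕ,
      ∫ x in Ioc (0:ℝ) 1, (n : ℝ) * (P {ω | √x * c n < |Z ω|}).toReal =
        (n : ℝ) * (P {ω | c n < |Z ω|}).toReal +
          (n : ℝ) / (c n) ^ 2 * ∫ ω in {ω | |Z ω| ≤ c n}, (Z ω) ^ 2 ∂P := fun n => by
    rw [integral_const_mul, integral_Ioc_eq_integral_Ioo]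
    simp only [← measureReal_def, setIntegral_Ioo_measureReal_sqrt_mul_lt_abs hZ (hc n)]
    ring
  simp only [split]
  refine ⟨fun h => by simpa using h.1.add h.2,
    fun h => Tendsto.nhds_zero_and_of_add_of_nonneg ?_ ?_ h⟩
  · exact fun n => mul_nonneg n.cast_nonneg measureReal_nonneg
  · exact fun n => mul_nonneg (by positivity) (setIntegral_nonneg
      (measurableSet_le hZ.abs measurable_const) fun ω _ => sq_nonneg _)

theorem stmt1 (P : Measure Ω) [IsProbabilityMeasure P] (Z : Ω → ℝ) (hZ : Measurable Z)
    (c : ℕ → ℝ) (hc : ∀ n, 0 < c n) (hc' : Tendsto c atTop atTop) :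
    (Tendsto (fun n : ℕ => (n : ℝ) * (P {ω | c n < |Z ω|}).toReal) atTop (nhds 0) ∧
      Tendsto (fun n : ℕ =>
        (n : ℝ) / (c n) ^ 2 * ∫ ω in {ω | |Z ω| ≤ c n}, (Z ω) ^ 2 ∂P) atTop (nhds 0)) ↔
    Tendsto (fun n : ℕ =>
      ∫ x in Set.Ioc (0:ℝ) 1, (n : ℝ) * (P {ω | Real.sqrt x * c n < |Z ω|}).toReal)
      atTop (nhds 0) :=
  stmt1_general P Z hZ c hc
end

section
/- Let X_1, X_2, … be a sequence of real random variables with partial sums S_n = X_1 + ⋯ + X_n, such that S_n − S_k has a symmetric distribution for all n > k ≥ 1, and let ψ'_1 := inf over k, over events A ∈ σ(X_1,…,X_k) and B ∈ σ(X_{k+1}, X_{k+2}, …) with P(A)P(B) > 0, of P(A∩B)/(P(A)P(B)). Then for all n ≥ 1 and x > 0: 2·P[|S_n| > x] ≥ ψ'_1 · P[max_{1≤k≤n} |S_k| > x]. -/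
/-!
Split the event `max_{k ≤ n} |S_k| > x` according to the first time `k` at which `|S_k| > x`
(`disjointed (exceedSet X x) k`), an event in `σ(X_1, …, X_k)`. On it, if `S_k > x` then
`|S_n| > x` as soon as `S_n - S_k ≥ 0`, and if `S_k < -x` then as soon as `S_n - S_k ≤ 0`.
Both events lie in `σ(X_{k+1}, …)` and, `S_n - S_k` being symmetric, have probability at
least `1/2`; hence `P(A ∩ B) ≥ ψ'_1 P(A) P(B)` gives
`P(first exit at k, |S_n| > x) ≥ ψ'_1 P(first exit at k) / 2`, and one sums over `k`.
-/

open MeasureTheory Filter Set ProbabilityTheory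

variable {Ω : Type*} [MeasurableSpace Ω]

lemma Real.exists_lt_of_lt_biSup {ι : Type*} {p : ι → Prop} {f : ι → ℝ} {x : ℝ} (hx : 0 ≤ x)
    (h : x < ⨆ (i) (_ : p i), f i) : ∃ i, p i ∧ x < f i := by
  by_contra! H
  exact h.not_ge <| Real.iSup_le (fun i => Real.iSup_le (H i) hx) hx

lemma half_le_measureReal_nonneg_and_nonpos {μ : Measure Ω} [IsProbabilityMeasure μ]
    {Y : Ω → ℝ} (hY : Measurable Y) (hsym : μ.map Y = μ.map (fun ω => -Y ω)) :
    1 / 2 ≤ μ.real {ω | 0 ≤ Y ω} ∧ 1 / 2 ≤ μ.real {ω | Y ω ≤ 0} := by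
  have heq : μ.real {ω | 0 ≤ Y ω} = μ.real {ω | Y ω ≤ 0} := by
    have := congrArg (fun ν : Measure ℝ => ν.real (Ici 0)) hsym
    simp only [map_measureReal_apply hY measurableSet_Ici,
      map_measureReal_apply (f := fun ω => -Y ω) hY.neg measurableSet_Ici] at this
    simpa [Set.preimage, neg_nonneg] using this
  have hcover : 1 ≤ μ.real {ω | 0 ≤ Y ω} + μ.real {ω | Y ω ≤ 0} :=
    calc 1 = μ.real univ := probReal_univ.symm
      _ ≤ μ.real ({ω | 0 ≤ Y ω} ∪ {ω | Y ω ≤ 0}) :=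
        measureReal_mono fun ω _ => le_total 0 (Y ω)
      _ ≤ _ := measureReal_union_le _ _
  constructor <;> linarith

section Mixing

variable {P : Measure Ω} {X : ℕ → Ω → ℝ} {m k : ℕ} {A B : Set Ω}

lemma nonneg_of_mem_psiRatioSet {r : ℝ} (hr : r ∈ psiRatioSet P X m) : 0 ≤ r := by
  obtain ⟨k, -, A, B, -, -, hpos, rfl⟩ := hr
  exact div_nonneg ENNReal.toReal_nonneg hpos.le

lemma psiPrime_nonneg : 0 ≤ psiPrime P X m :=
  Real.sInf_nonneg fun _ => nonneg_of_mem_psiRatioSet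

lemma psiPrime_mul_le (hk : 1 ≤ k) (hA : MeasurableSet[blockS X (Icc 1 k)] A)
    (hB : MeasurableSet[blockS X (Ici (k + m))] B) :
    psiPrime P X m * (P.real A * P.real B) ≤ P.real (A ∩ B) := by
  rcases (mul_nonneg measureReal_nonneg measureReal_nonneg).eq_or_lt with h0 | hpos
  · rw [← h0, mul_zero]
    exact measureReal_nonneg
  · exact (le_div_iff₀ hpos).1 <|
      csInf_le ⟨0, fun _ => nonneg_of_mem_psiRatioSet⟩ ⟨k, hk, A, B, hA, hB, hpos, rfl⟩

lemma psiPrime_mul_le_two_mul (hk : 1 ≤ k) (hA : MeasurableSet[blockS X (Icc 1 k)] A)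
    (hB : MeasurableSet[blockS X (Ici (k + m))] B) (hB_half : 1 / 2 ≤ P.real B) :
    psiPrime P X m * P.real A ≤ 2 * P.real (A ∩ B) :=
  calc psiPrime P X m * P.real A = 2 * (psiPrime P X m * (P.real A * (1 / 2))) := by ring
    _ ≤ 2 * (psiPrime P X m * (P.real A * P.real B)) := by
      gcongr
      exact psiPrime_nonneg
    _ ≤ 2 * P.real (A ∩ B) := by
      gcongr
      exact psiPrime_mul_le hk hA hB

end Mixing

lemma blockS_le {X : ℕ → Ω → ℝ} (hX : ∀ i, Measurable (X i)) (s : Set ℕ) :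
    blockS X s ≤ ‹MeasurableSpace Ω› :=
  iSup₂_le fun i _ => (hX i).comap_le

lemma measurable_pSum {X : ℕ → Ω → ℝ} (hX : ∀ i, Measurable (X i)) (n : ℕ) :
    Measurable (pSum X n) :=
  Finset.measurable_sum _ fun i _ => hX i

section Blocks

variable {α : Type*} {X : ℕ → α → ℝ}

lemma measurable_blockS {s : Set ℕ} {i : ℕ} (hi : i ∈ s) : Measurable[blockS X s] (X i) :=
  measurable_iff_comap_le.2 <|
    le_iSup₂ (f := fun i (_ : i ∈ s) => MeasurableSpace.comap (X i) inferInstance) i hi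

lemma measurable_pSum_blockS_Icc {j k : ℕ} (hjk : j ≤ k) :
    Measurable[blockS X (Icc 1 k)] (pSum X j) :=
  Finset.measurable_sum _ fun _ hi =>
    measurable_blockS ⟨(Finset.mem_Icc.1 hi).1, (Finset.mem_Icc.1 hi).2.trans hjk⟩

lemma pSum_sub_pSum {k n : ℕ} (hkn : k ≤ n) (ω : α) :
    pSum X n ω - pSum X k ω = ∑ i ∈ Finset.Ioc k n, X i ω := by
  rw [sub_eq_iff_eq_add']
  exact (Finset.sum_Ioc_consecutive (fun i => X i ω) (Nat.zero_le k) hkn).symm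

lemma measurable_pSum_sub_pSum_blockS_Ici {k n : ℕ} (hkn : k ≤ n) :
    Measurable[blockS X (Ici (k + 1))] (fun ω => pSum X n ω - pSum X k ω) := by
  simp_rw [pSum_sub_pSum hkn]
  exact Finset.measurable_sum _ fun _ hi => measurable_blockS (Finset.mem_Ioc.1 hi).1

def exceedSet (X : ℕ → α → ℝ) (x : ℝ) (k : ℕ) : Set α := {ω | x < |pSum X k ω|}

lemma exceedSet_zero {x : ℝ} (hx : 0 ≤ x) : exceedSet X x 0 = ∅ := by
  simp [exceedSet, pSum, hx.not_gt]

lemma measurableSet_exceedSet_blockS (x : ℝ) {j k : ℕ} (hjk : j ≤ k) :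
    MeasurableSet[blockS X (Icc 1 k)] (exceedSet X x j) :=
  measurableSet_lt measurable_const (measurable_abs.comp (measurable_pSum_blockS_Icc hjk))

lemma measurableSet_disjointed_exceedSet_blockS (x : ℝ) (k : ℕ) :
    MeasurableSet[blockS X (Icc 1 k)] (disjointed (exceedSet X x) k) := by
  rw [disjointed_eq_inter_compl]
  exact (measurableSet_exceedSet_blockS x le_rfl).inter <| .biInter (to_countable _)
    fun _ hj => (measurableSet_exceedSet_blockS x (le_of_lt hj)).compl

lemma setOf_lt_biSup_abs_pSum_subset {x : ℝ} (hx : 0 ≤ x) (n : ℕ) :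
    {ω | x < ⨆ k ∈ Finset.Icc 1 n, |pSum X k ω|} ⊆
      ⋃ k ∈ Finset.Iic n, disjointed (exceedSet X x) k := by
  intro ω hω
  obtain ⟨k, hk, hxk⟩ := Real.exists_lt_of_lt_biSup hx hω
  rw [biUnion_Iic_disjointed, partialSups_eq_biSup]
  simp only [iSup_eq_iUnion, mem_iUnion]
  exact ⟨k, (Finset.mem_Icc.1 hk).2, hxk⟩

end Blocks

lemma psiPrime_mul_measureReal_disjointed_exceedSet_le {P : Measure Ω} [IsProbabilityMeasure P]
    {X : ℕ → Ω → ℝ} (hX : ∀ i, Measurable (X i))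
    (hsym : ∀ k n : ℕ, 1 ≤ k → k < n →
      P.map (fun ω => pSum X n ω - pSum X k ω) = P.map (fun ω => -(pSum X n ω - pSum X k ω)))
    {x : ℝ} (hx : 0 ≤ x) {k n : ℕ} (hkn : k ≤ n) :
    psiPrime P X 1 * P.real (disjointed (exceedSet X x) k) ≤
      2 * P.real (disjointed (exceedSet X x) k ∩ exceedSet X x n) := by
  rcases Nat.eq_zero_or_pos k with rfl | hk
  · simp [exceedSet_zero hx]
  set D := disjointed (exceedSet X x) k
  set H := {ω | 0 ≤ pSum X k ω}
  set Bpos := {ω | 0 ≤ pSum X n ω - pSum X k ω}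
  set Bneg := {ω | pSum X n ω - pSum X k ω ≤ 0}
  have hD : MeasurableSet[blockS X (Icc 1 k)] D := measurableSet_disjointed_exceedSet_blockS x k
  have hH : MeasurableSet[blockS X (Icc 1 k)] H :=
    measurableSet_le measurable_const (measurable_pSum_blockS_Icc le_rfl)
  have hY := measurable_pSum_sub_pSum_blockS_Ici (X := X) hkn
  have hBpos : MeasurableSet[blockS X (Ici (k + 1))] Bpos := measurableSet_le measurable_const hY
  have hBneg : MeasurableSet[blockS X (Ici (k + 1))] Bneg := measurableSet_le hY measurable_const
  have hYsym : P.map (fun ω => pSum X n ω - pSum X k ω) =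
      P.map (fun ω => -(pSum X n ω - pSum X k ω)) := by
    rcases hkn.lt_or_eq with h | rfl
    · exact hsym k n hk h
    · simp
  obtain ⟨halfPos, halfNeg⟩ := half_le_measureReal_nonneg_and_nonpos
    ((measurable_pSum hX n).sub (measurable_pSum hX k)) hYsym
  have ePos := psiPrime_mul_le_two_mul hk (hD.inter hH) hBpos halfPos
  have eNeg := psiPrime_mul_le_two_mul hk (hD.diff hH) hBneg halfNeg
  have hsplit : P.real (D ∩ H) + P.real (D \ H) = P.real D :=
    measureReal_inter_add_sdiff (blockS_le hX _ _ hH)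
  have hunion : P.real (D ∩ H ∩ Bpos) + P.real (D \ H ∩ Bneg) =
      P.real (D ∩ H ∩ Bpos ∪ D \ H ∩ Bneg) :=
    (measureReal_union (disjoint_sdiff_inter.symm.mono inter_subset_left inter_subset_left)
      ((blockS_le hX _ _ (hD.diff hH)).inter (blockS_le hX _ _ hBneg))).symm
  have hsub : D ∩ H ∩ Bpos ∪ D \ H ∩ Bneg ⊆ D ∩ exceedSet X x n := by
    rintro ω (⟨⟨hωD, hωH⟩, hωB⟩ | ⟨⟨hωD, hωH⟩, hωB⟩) <;>
      refine ⟨hωD, show x < |pSum X n ω| from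
        (disjointed_subset (exceedSet X x) k hωD : x < |pSum X k ω|).trans_le ?_⟩
    · exact abs_le_abs_of_nonneg hωH (sub_nonneg.1 hωB)
    · exact abs_le_abs_of_nonpos (not_le.1 hωH).le (sub_nonpos.1 hωB)
  rw [← hsplit, mul_add]
  linarith [measureReal_mono (μ := P) hsub]

theorem stmt2_general (P : Measure Ω) [IsProbabilityMeasure P] (X : ℕ → Ω → ℝ)
    (hX : ∀ i, Measurable (X i))
    (hsym : ∀ k n : ℕ, 1 ≤ k → k < n →
      Measure.map (fun ω => pSum X n ω - pSum X k ω) P =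
        Measure.map (fun ω => -(pSum X n ω - pSum X k ω)) P)
    (n : ℕ) (x : ℝ) (hx : 0 < x) :
    psiPrime P X 1 * (P {ω | x < ⨆ k ∈ Finset.Icc 1 n, |pSum X k ω|}).toReal ≤
      2 * (P {ω | x < |pSum X n ω|}).toReal := by
  set E := exceedSet X x
  have hDmeas (k : ℕ) : MeasurableSet (disjointed E k) :=
    blockS_le hX _ _ (measurableSet_disjointed_exceedSet_blockS x k)
  have hEmeas : MeasurableSet (E n) := blockS_le hX _ _ (measurableSet_exceedSet_blockS x le_rfl)
  have hDdisj : (Finset.Iic n : Set ℕ).PairwiseDisjoint (disjointed E) :=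
    (disjoint_disjointed E).set_pairwise _
  calc psiPrime P X 1 * P.real {ω | x < ⨆ k ∈ Finset.Icc 1 n, |pSum X k ω|}
      ≤ psiPrime P X 1 * P.real (⋃ k ∈ Finset.Iic n, disjointed E k) :=
        mul_le_mul_of_nonneg_left
          (measureReal_mono (setOf_lt_biSup_abs_pSum_subset hx.le n) (measure_ne_top P _))
          psiPrime_nonneg
    _ = ∑ k ∈ Finset.Iic n, psiPrime P X 1 * P.real (disjointed E k) := by
        rw [measureReal_biUnion_finset hDdisj fun k _ => hDmeas k, Finset.mul_sum]
    _ ≤ ∑ k ∈ Finset.Iic n, 2 * P.real (disjointed E k ∩ E n) :=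
        Finset.sum_le_sum fun k hk =>
          psiPrime_mul_measureReal_disjointed_exceedSet_le hX hsym hx.le (Finset.mem_Iic.1 hk)
    _ = 2 * P.real (⋃ k ∈ Finset.Iic n, disjointed E k ∩ E n) := by
        rw [measureReal_biUnion_finset (hDdisj.mono fun k => inter_subset_left)
          fun k _ => (hDmeas k).inter hEmeas, Finset.mul_sum]
    _ ≤ 2 * P.real (E n) := mul_le_mul_of_nonneg_left
        (measureReal_mono (iUnion₂_subset fun _ _ => inter_subset_right) (measure_ne_top P _))
        zero_le_two

theorem stmt2 (P : Measure Ω) [IsProbabilityMeasure P] (X : ℕ → Ω → ℝ)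
    (hX : ∀ i, Measurable (X i))
    (hsym : ∀ k n : ℕ, 1 ≤ k → k < n →
      Measure.map (fun ω => pSum X n ω - pSum X k ω) P =
        Measure.map (fun ω => -(pSum X n ω - pSum X k ω)) P)
    (n : ℕ) (hn : 1 ≤ n) (x : ℝ) (hx : 0 < x) :
    psiPrime P X 1 * (P {ω | x < ⨆ k ∈ Finset.Icc 1 n, |pSum X k ω|}).toReal ≤
      2 * (P {ω | x < |pSum X n ω|}).toReal :=
  stmt2_general P X hX hsym n x hx
end

section
/- Let {X_k} be a strictly stationary sequence with φ-mixing coefficient φ_m < 1 at lag m, and let {X*_k} be an i.i.d. sequence with X*_1 distributed as X_1. Let M_n = max_{1≤k≤n}|X_k| and M*_n = max_{1≤k≤n}|X*_k|. Then for every x ≥ 0 and all n ≥ m ≥ 1: (1−φ_m)·P[M*_{⌊n/m⌋} > x] ≤ P[M_n > x] ≤ m·(1+φ_m)·P[M*_{⌊n/m⌋+1} > x]. -/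
open MeasureTheory Filter Set ProbabilityTheory

variable {Ω : Type*} [MeasurableSpace Ω]

/-!
Split `1, …, n` into the `m` residue classes modulo `m`. Along one class `s, s + m, s + 2m, …`
consecutive terms are `m` apart, so φ-mixing applies to "the first term exceeds `x`" against
"a later term exceeds `x`": peeling off the first term, `|P(A ∩ B) - P(A) P(B)| ≤ φ_m P(A)` turns
the exact i.i.d. recursion `w_{r+1} = u + (1 - u) w_r` into one perturbed by at most `φ_m u`, so
the probability that one of `r` terms exceeds `x` lies between `(1 ∓ φ_m) (1 - (1 - u)^r)`, the
i.i.d. value scaled. The lower bound uses the first `⌊n/m⌋` terms of the class of `1`, all of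
which lie in `1, …, n`; the upper bound is a union bound over all `m` classes, each with at most
`⌊n/m⌋ + 1` terms and, by stationarity, with the same probability.
-/

theorem measurableSet_blockS_preimage {α : Type*} {X : ℕ → α → ℝ} {s : Set ℕ} {k : ℕ}
    (hk : k ∈ s) {S : Set ℝ} (hS : MeasurableSet S) : MeasurableSet[blockS X s] (X k ⁻¹' S) :=
  le_iSup₂ (f := fun i (_ : i ∈ s) => (inferInstance : MeasurableSpace ℝ).comap (X i))
    k hk _ ⟨S, hS, rfl⟩

section PhiMixing

variable {P : Measure Ω} [IsProbabilityMeasure P] {X : ℕ → Ω → ℝ} {m k : ℕ} {A B : Set Ω}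

theorem abs_measureReal_inter_div_sub_le_one (hA : 0 < P.real A) :
    |P.real (A ∩ B) / P.real A - P.real B| ≤ 1 := by
  have h₁ : P.real (A ∩ B) / P.real A ≤ 1 := (div_le_one hA).2 (measureReal_mono inter_subset_left)
  have h₂ : 0 ≤ P.real (A ∩ B) / P.real A := by positivity
  have h₃ : P.real B ≤ 1 := measureReal_le_one
  have h₄ : 0 ≤ P.real B := measureReal_nonneg
  exact abs_le.2 ⟨by linarith, by linarith⟩

theorem abs_measureReal_inter_div_sub_le_phiCoef (hk : 1 ≤ k)
    (hA : MeasurableSet[blockS X (Icc 1 k)] A) (hB : MeasurableSet[blockS X (Ici (k + m))] B)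
    (hApos : 0 < P.real A) :
    |P.real (A ∩ B) / P.real A - P.real B| ≤ phiCoef P X m :=
  le_csSup ⟨1, by
    rintro _ ⟨k, -, A, B, -, -, hA, rfl⟩
    exact abs_measureReal_inter_div_sub_le_one hA⟩ ⟨k, hk, A, B, hA, hB, hApos, rfl⟩

theorem abs_measureReal_inter_sub_mul_le_phiCoef (hk : 1 ≤ k)
    (hA : MeasurableSet[blockS X (Icc 1 k)] A) (hB : MeasurableSet[blockS X (Ici (k + m))] B) :
    |P.real (A ∩ B) - P.real A * P.real B| ≤ phiCoef P X m * P.real A := by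
  rcases (measureReal_nonneg (s := A)).eq_or_lt with hA0 | hApos
  · rw [← hA0, measureReal_mono_null inter_subset_left hA0.symm]
    simp
  · calc |P.real (A ∩ B) - P.real A * P.real B|
        = |P.real A * (P.real (A ∩ B) / P.real A - P.real B)| := by
          rw [mul_sub, mul_div_cancel₀ _ hApos.ne']
      _ = P.real A * |P.real (A ∩ B) / P.real A - P.real B| := by
          rw [abs_mul, abs_of_pos hApos]
      _ ≤ P.real A * phiCoef P X m :=
          mul_le_mul_of_nonneg_left (abs_measureReal_inter_div_sub_le_phiCoef hk hA hB hApos)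
            hApos.le
      _ = phiCoef P X m * P.real A := mul_comm _ _

end PhiMixing

theorem Stationary.map_shift {P : Measure Ω} {X : ℕ → Ω → ℝ} (hX : ∀ i, Measurable (X i))
    (hstat : Stationary P X) {s : ℕ} (hs : 1 ≤ s) :
    P.map (fun ω i => X (i + s) ω) = P.map (fun ω i => X (i + 1) ω) := by
  have hshift : Measurable fun (f : ℕ → ℝ) i => f (i + 1) := by fun_prop
  have hmeas : ∀ t, Measurable fun ω i => X (i + t) ω := fun t => by fun_prop
  induction s, hs using Nat.le_induction with
  | base => rfl
  | succ s _ ih =>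
    calc P.map (fun ω i => X (i + (s + 1)) ω)
        = (P.map fun ω i => X (i + s) ω).map fun f i => f (i + 1) := by
          rw [Measure.map_map hshift (hmeas s)]
          simp only [Function.comp_def, Nat.add_right_comm _ 1 s, Nat.add_assoc]
      _ = (P.map fun ω i => X (i + 1) ω).map fun f i => f (i + 1) := by rw [ih]
      _ = P.map (fun ω i => X (i + 1) ω) := by
          rw [Measure.map_map hshift (hmeas 1)]
          exact hstat

theorem perturbed_affine_recurrence_bounds {u φ : ℝ} {v : ℕ → ℝ} (hu : u ≤ 1) (hv₀ : v 0 = 0)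
    (hv : ∀ r, |v (r + 1) - (u + (1 - u) * v r)| ≤ φ * u) (r : ℕ) :
    (1 - φ) * (1 - (1 - u) ^ r) ≤ v r ∧ v r ≤ (1 + φ) * (1 - (1 - u) ^ r) := by
  induction r with
  | zero => simp [hv₀]
  | succ r ih =>
    obtain ⟨hlo, hhi⟩ := ih
    obtain ⟨hstep_lo, hstep_hi⟩ := abs_le.1 (hv r)
    have hu' : 0 ≤ 1 - u := by linarith
    have hlo' := mul_le_mul_of_nonneg_left hlo hu'
    have hhi' := mul_le_mul_of_nonneg_left hhi hu'
    rw [pow_succ]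
    constructor <;> nlinarith

def progressionHit {α : Type*} (X : ℕ → α → ℝ) (S : Set ℝ) (m s r : ℕ) : Set α :=
  ⋃ i < r, X (i * m + s) ⁻¹' S

theorem progressionHit_succ {α : Type*} (X : ℕ → α → ℝ) (S : Set ℝ) (m s r : ℕ) :
    progressionHit X S m s (r + 1) = X s ⁻¹' S ∪ progressionHit X S m (s + m) r := by
  simp only [progressionHit, biUnion_lt_succ', zero_mul, zero_add, add_one_mul, add_assoc,
    add_comm m s]

theorem measurableSet_blockS_progressionHit {α : Type*} {X : ℕ → α → ℝ} {S : Set ℝ}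
    (hS : MeasurableSet S) (m s r : ℕ) :
    MeasurableSet[blockS X (Ici s)] (progressionHit X S m s r) :=
  MeasurableSet.iUnion fun i => MeasurableSet.iUnion fun _ =>
    measurableSet_blockS_preimage (Nat.le_add_left s (i * m)) hS

theorem progressionHit_subset_biUnion_Icc {α : Type*} (X : ℕ → α → ℝ) (S : Set ℝ) {m q n : ℕ}
    (hm : 1 ≤ m) (hq : q * m ≤ n) :
    progressionHit X S m 1 q ⊆ ⋃ k ∈ Finset.Icc 1 n, X k ⁻¹' S := by
  intro a ha
  obtain ⟨i, hi, ha⟩ := mem_iUnion₂.1 ha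
  have h : (i + 1) * m ≤ q * m := Nat.mul_le_mul_right m hi
  rw [add_one_mul] at h
  exact mem_iUnion₂.2 ⟨i * m + 1, Finset.mem_Icc.2 ⟨le_add_self, by omega⟩, ha⟩

theorem biUnion_Icc_subset_progressionHit {α : Type*} (X : ℕ → α → ℝ) (S : Set ℝ) {m : ℕ}
    (hm : 1 ≤ m) (n : ℕ) :
    ⋃ k ∈ Finset.Icc 1 n, X k ⁻¹' S ⊆
      ⋃ j ∈ Finset.Icc 1 m, progressionHit X S m j (n / m + 1) := by
  intro a ha
  obtain ⟨k, hk, ha⟩ := mem_iUnion₂.1 ha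
  rw [Finset.mem_Icc] at hk
  have hk' : (k - 1) / m * m + ((k - 1) % m + 1) = k := by
    have := Nat.div_add_mod' (k - 1) m
    omega
  refine mem_iUnion₂.2 ⟨(k - 1) % m + 1, Finset.mem_Icc.2 ⟨le_add_self, Nat.mod_lt _ hm⟩,
    mem_iUnion₂.2 ⟨(k - 1) / m, Nat.lt_succ_of_le (Nat.div_le_div_right (by omega)), ?_⟩⟩
  rwa [hk']

section Progression

variable {P : Measure Ω} {X : ℕ → Ω → ℝ} {S : Set ℝ} {m : ℕ}

theorem measurableSet_progressionHit (hX : ∀ i, Measurable (X i)) (hS : MeasurableSet S)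
    (s r : ℕ) : MeasurableSet (progressionHit X S m s r) :=
  MeasurableSet.iUnion fun _ => MeasurableSet.iUnion fun _ => hX _ hS

theorem Stationary.measureReal_progressionHit (hX : ∀ i, Measurable (X i))
    (hstat : Stationary P X) (hS : MeasurableSet S) {s : ℕ} (hs : 1 ≤ s) (r : ℕ) :
    P.real (progressionHit X S m s r) = P.real (progressionHit X S m 1 r) := by
  let C : Set (ℕ → ℝ) := ⋃ i < r, (fun f => f (i * m)) ⁻¹' S
  have hC : MeasurableSet C :=
    MeasurableSet.iUnion fun i => MeasurableSet.iUnion fun _ => measurable_pi_apply _ hS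
  have hpre : ∀ t, progressionHit X S m t r = (fun ω i => X (i + t) ω) ⁻¹' C := fun t => by
    ext; simp [progressionHit, C]
  have hmeas : ∀ t, Measurable fun ω i => X (i + t) ω := fun t => by fun_prop
  rw [hpre, hpre, ← map_measureReal_apply (hmeas s) hC, ← map_measureReal_apply (hmeas 1) hC,
    hstat.map_shift hX hs]

theorem Stationary.abs_measureReal_progressionHit_succ_sub_le [IsProbabilityMeasure P]
    (hX : ∀ i, Measurable (X i)) (hstat : Stationary P X) (hS : MeasurableSet S) (r : ℕ) :
    |P.real (progressionHit X S m 1 (r + 1)) -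
        (P.real (X 1 ⁻¹' S) + (1 - P.real (X 1 ⁻¹' S)) * P.real (progressionHit X S m 1 r))| ≤
      phiCoef P X m * P.real (X 1 ⁻¹' S) := by
  set A := X 1 ⁻¹' S
  set B := progressionHit X S m (1 + m) r
  have hB : P.real B = P.real (progressionHit X S m 1 r) :=
    hstat.measureReal_progressionHit hX hS (Nat.le_add_right 1 m) r
  have hAB : P.real (A ∪ B) + P.real (A ∩ B) = P.real A + P.real B :=
    measureReal_union_add_inter (s := A) (measurableSet_progressionHit hX hS _ _)
  have hmix : |P.real (A ∩ B) - P.real A * P.real B| ≤ phiCoef P X m * P.real A :=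
    abs_measureReal_inter_sub_mul_le_phiCoef le_rfl
      (measurableSet_blockS_preimage (left_mem_Icc.2 le_rfl) hS)
      (measurableSet_blockS_progressionHit hS m (1 + m) r)
  have hdiff : P.real (A ∪ B) - (P.real A + (1 - P.real A) * P.real B) =
      -(P.real (A ∩ B) - P.real A * P.real B) := by
    linarith
  rw [progressionHit_succ, ← hB, hdiff, abs_neg]
  exact hmix

theorem Stationary.measureReal_progressionHit_bounds [IsProbabilityMeasure P]
    (hX : ∀ i, Measurable (X i)) (hstat : Stationary P X) (hS : MeasurableSet S) (r : ℕ) :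
    (1 - phiCoef P X m) * (1 - (1 - P.real (X 1 ⁻¹' S)) ^ r) ≤
        P.real (progressionHit X S m 1 r) ∧
      P.real (progressionHit X S m 1 r) ≤
        (1 + phiCoef P X m) * (1 - (1 - P.real (X 1 ⁻¹' S)) ^ r) :=
  perturbed_affine_recurrence_bounds (v := fun r => P.real (progressionHit X S m 1 r))
    measureReal_le_one (by simp [progressionHit])
    (hstat.abs_measureReal_progressionHit_succ_sub_le hX hS) r

theorem Stationary.measureReal_biUnion_Icc_le [IsProbabilityMeasure P]
    (hX : ∀ i, Measurable (X i)) (hstat : Stationary P X) (hS : MeasurableSet S) (hm : 1 ≤ m)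
    (n : ℕ) :
    P.real (⋃ k ∈ Finset.Icc 1 n, X k ⁻¹' S) ≤ m * P.real (progressionHit X S m 1 (n / m + 1)) :=
  calc P.real (⋃ k ∈ Finset.Icc 1 n, X k ⁻¹' S)
      ≤ P.real (⋃ j ∈ Finset.Icc 1 m, progressionHit X S m j (n / m + 1)) :=
        measureReal_mono (biUnion_Icc_subset_progressionHit X S hm n) (measure_ne_top _ _)
    _ ≤ ∑ j ∈ Finset.Icc 1 m, P.real (progressionHit X S m j (n / m + 1)) :=
        measureReal_biUnion_finset_le _ _
    _ = m * P.real (progressionHit X S m 1 (n / m + 1)) := by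
        rw [Finset.sum_congr rfl fun j hj =>
          hstat.measureReal_progressionHit hX hS (Finset.mem_Icc.1 hj).1 _,
          Finset.sum_const, Nat.card_Icc, nsmul_eq_mul, Nat.add_sub_cancel]

end Progression

theorem ProbabilityTheory.iIndepFun.measureReal_biUnion_preimage {P : Measure Ω}
    [IsProbabilityMeasure P] {ι β : Type*} [MeasurableSpace β] {Xs : ι → Ω → β} {Y : Ω → β}
    (hindep : iIndepFun Xs P) (hXs : ∀ i, Measurable (Xs i)) (hY : Measurable Y)
    (hid : ∀ i, P.map (Xs i) = P.map Y) (s : Finset ι) {S : Set β} (hS : MeasurableSet S) :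
    P.real (⋃ i ∈ s, Xs i ⁻¹' S) = 1 - (1 - P.real (Y ⁻¹' S)) ^ s.card := by
  have hU : MeasurableSet (⋃ i ∈ s, Xs i ⁻¹' S) := s.measurableSet_biUnion fun i _ => hXs i hS
  have hcompl : (⋃ i ∈ s, Xs i ⁻¹' S)ᶜ = ⋂ i ∈ s, Xs i ⁻¹' Sᶜ := by
    simp only [compl_iUnion, preimage_compl]
  have hmarg : ∀ i, P.real (Xs i ⁻¹' Sᶜ) = 1 - P.real (Y ⁻¹' S) := fun i => by
    rw [← map_measureReal_apply (hXs i) hS.compl, hid, map_measureReal_apply hY hS.compl,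
      preimage_compl, probReal_compl_eq_one_sub (hY hS)]
  have hprod : P.real (⋂ i ∈ s, Xs i ⁻¹' Sᶜ) = ∏ i ∈ s, P.real (Xs i ⁻¹' Sᶜ) := by
    simp only [measureReal_def, hindep.meas_biInter fun i _ => ⟨Sᶜ, hS.compl, rfl⟩,
      ENNReal.toReal_prod]
  have h := probReal_compl_eq_one_sub (μ := P) hU
  rw [hcompl, hprod, Finset.prod_congr rfl fun i _ => hmarg i, Finset.prod_const] at h
  linarith

theorem lt_biSup_finset_iff_of_nonneg {ι : Type*} {s : Finset ι} {f : ι → ℝ} {x : ℝ}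
    (hx : 0 ≤ x) : x < ⨆ i ∈ s, f i ↔ ∃ i ∈ s, x < f i := by
  constructor
  · contrapose!
    exact fun h => Real.iSup_le (fun i => Real.iSup_le (h i) hx) hx
  · rintro ⟨i, hi, hlt⟩
    have hbdd : BddAbove (range fun i => ⨆ _ : i ∈ s, f i) :=
      ⟨∑ j ∈ s, |f j|, forall_mem_range.2 fun j => Real.iSup_le (fun hj =>
        (le_abs_self _).trans (Finset.single_le_sum (fun k _ => abs_nonneg (f k)) hj))
        (by positivity)⟩
    calc x < f i := hlt
      _ = ⨆ _ : i ∈ s, f i := (ciSup_pos (f := fun _ => f i) hi).symm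
      _ ≤ ⨆ i ∈ s, f i := le_ciSup hbdd i

theorem stmt5_general (P : Measure Ω) [IsProbabilityMeasure P] (X Xs : ℕ → Ω → ℝ)
    (hX : ∀ i, Measurable (X i)) (hXs : ∀ i, Measurable (Xs i))
    (hstat : Stationary P X)
    (hindep : iIndepFun Xs P)
    (hid : ∀ i, Measure.map (Xs i) P = Measure.map (X 1) P)
    (m : ℕ) (hm : 1 ≤ m)
    (n : ℕ) (x : ℝ) (hx : 0 ≤ x) :
    (1 - phiCoef P X m) *
        (P {ω | x < ⨆ k ∈ Finset.Icc 1 (n / m), |Xs k ω|}).toReal ≤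
      (P {ω | x < ⨆ k ∈ Finset.Icc 1 n, |X k ω|}).toReal ∧
    (P {ω | x < ⨆ k ∈ Finset.Icc 1 n, |X k ω|}).toReal ≤
      (m : ℝ) * (1 + phiCoef P X m) *
        (P {ω | x < ⨆ k ∈ Finset.Icc 1 (n / m + 1), |Xs k ω|}).toReal := by
  set S : Set ℝ := {y | x < |y|}
  have hS : MeasurableSet S := measurableSet_lt measurable_const measurable_abs
  have hevent : ∀ (Y : ℕ → Ω → ℝ) (r : ℕ),
      {ω | x < ⨆ k ∈ Finset.Icc 1 r, |Y k ω|} = ⋃ k ∈ Finset.Icc 1 r, Y k ⁻¹' S := fun Y r => by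
    ext ω
    simp only [S, mem_ofPred_eq, mem_iUnion, mem_preimage, exists_prop]
    exact lt_biSup_finset_iff_of_nonneg hx
  simp only [← measureReal_def, hevent, hindep.measureReal_biUnion_preimage hXs (hX 1) hid _ hS,
    Nat.card_Icc, Nat.add_sub_cancel]
  obtain ⟨hlo, -⟩ := hstat.measureReal_progressionHit_bounds hX hS (m := m) (n / m)
  obtain ⟨-, hhi⟩ := hstat.measureReal_progressionHit_bounds hX hS (m := m) (n / m + 1)
  constructor
  · exact hlo.trans <| measureReal_mono
      (progressionHit_subset_biUnion_Icc X S hm (Nat.div_mul_le_self n m)) (measure_ne_top _ _)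
  · calc P.real (⋃ k ∈ Finset.Icc 1 n, X k ⁻¹' S)
        ≤ m * P.real (progressionHit X S m 1 (n / m + 1)) :=
          hstat.measureReal_biUnion_Icc_le hX hS hm n
      _ ≤ m * ((1 + phiCoef P X m) * (1 - (1 - P.real (X 1 ⁻¹' S)) ^ (n / m + 1))) :=
          mul_le_mul_of_nonneg_left hhi (Nat.cast_nonneg m)
      _ = _ := (mul_assoc _ _ _).symm

theorem stmt5 (P : Measure Ω) [IsProbabilityMeasure P] (X Xs : ℕ → Ω → ℝ)
    (hX : ∀ i, Measurable (X i)) (hXs : ∀ i, Measurable (Xs i))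
    (hstat : Stationary P X)
    (hindep : iIndepFun Xs P)
    (hid : ∀ i, Measure.map (Xs i) P = Measure.map (X 1) P)
    (m : ℕ) (hm : 1 ≤ m) (hphi : phiCoef P X m < 1)
    (n : ℕ) (hn : m ≤ n) (x : ℝ) (hx : 0 ≤ x) :
    (1 - phiCoef P X m) *
        (P {ω | x < ⨆ k ∈ Finset.Icc 1 (n / m), |Xs k ω|}).toReal ≤
      (P {ω | x < ⨆ k ∈ Finset.Icc 1 n, |X k ω|}).toReal ∧
    (P {ω | x < ⨆ k ∈ Finset.Icc 1 n, |X k ω|}).toReal ≤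
      (m : ℝ) * (1 + phiCoef P X m) *
        (P {ω | x < ⨆ k ∈ Finset.Icc 1 (n / m + 1), |Xs k ω|}).toReal :=
  stmt5_general P X Xs hX hXs hstat hindep hid m hm n x hx
end

section
/- Let {X_k} be a strictly stationary sequence with φ-mixing coefficient φ_1 < 1 at lag 1 and with unbounded |X_1| (i.e. sup{x : P[|X_1| ≤ x] < 1} = ∞). Then for every q > 0, x > 0, and n ≥ 1: (1−φ_1)·n·E[|X_1|^q·1_{|X_1| > x}] / (1 + n·P[|X_1| > x]) ≤ E[(max_{1≤k≤n}|X_k|)^q]. -/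
open MeasureTheory Filter Set ProbabilityTheory
open scoped ENNReal

variable {Ω : Type*} [MeasurableSpace Ω]

/-!
Fix a level `y`, let `C_k = {|X_k| > y}` and `U = C_1 ∪ ⋯ ∪ C_n`; by stationarity every `C_k` has
probability `p = P(C_1)`. The "last exceedance" events `E_k = C_k \ (C_{k+1} ∪ ⋯ ∪ C_n)` are
disjoint subsets of `U`, and φ-mixing at lag 1 between `σ(X_1, …, X_k)` and `σ(X_{k+1}, …)` gives
`P(E_k) ≥ p (1 - φ_1 - P(U))`. Summing over `k` yields `(1 - φ_1) n p ≤ (1 + n p) P(M_n > y)`.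
Taking `y = max(x, t^{1/q})` and integrating over `t > 0` (layer-cake formula) gives the bound.
-/

lemma measurableSet_blockS_preimage_s6 {Ω : Type*} {X : ℕ → Ω → ℝ} {s : Set ℕ} {i : ℕ} (hi : i ∈ s)
    {T : Set ℝ} (hT : MeasurableSet T) : MeasurableSet[blockS X s] (X i ⁻¹' T) :=
  le_iSup₂ (f := fun i (_ : i ∈ s) => MeasurableSpace.comap (X i) inferInstance) i hi _
    ⟨T, hT, rfl⟩

lemma abs_sub_le_phiCoef (P : Measure Ω) [IsFiniteMeasure P] (X : ℕ → Ω → ℝ) {m k : ℕ}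
    (hk : 1 ≤ k) {A B : Set Ω} (hA : MeasurableSet[blockS X (Icc 1 k)] A)
    (hB : MeasurableSet[blockS X (Ici (k + m))] B) (hPA : 0 < P.real A) :
    |P.real (A ∩ B) / P.real A - P.real B| ≤ phiCoef P X m := by
  refine le_csSup ⟨1 + P.real univ, ?_⟩ ⟨k, hk, A, B, hA, hB, hPA, rfl⟩
  rintro _ ⟨k, -, A, B, -, -, hPA, rfl⟩
  change 0 < P.real A at hPA
  change |P.real (A ∩ B) / P.real A - P.real B| ≤ _
  have hcond : P.real (A ∩ B) / P.real A ≤ 1 :=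
    div_le_one_of_le₀ (measureReal_mono inter_subset_left) hPA.le
  have hB : P.real B ≤ P.real univ := measureReal_mono (subset_univ B)
  rw [abs_le]
  constructor <;> linarith [measureReal_nonneg (μ := P) (s := B),
    div_nonneg (measureReal_nonneg (μ := P) (s := A ∩ B)) hPA.le]

lemma measureReal_mul_sub_phiCoef_le_measureReal_diff (P : Measure Ω) [IsFiniteMeasure P]
    (X : ℕ → Ω → ℝ) {m k : ℕ} (hk : 1 ≤ k) {A B : Set Ω}
    (hA : MeasurableSet[blockS X (Icc 1 k)] A) (hB : MeasurableSet[blockS X (Ici (k + m))] B)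
    (hB' : MeasurableSet B) :
    P.real A * (1 - phiCoef P X m - P.real B) ≤ P.real (A \ B) := by
  have hsplit : P.real (A ∩ B) + P.real (A \ B) = P.real A := measureReal_inter_add_sdiff hB'
  rcases (measureReal_nonneg (μ := P) (s := A)).eq_or_lt with hPA | hPA
  · rw [← hPA, zero_mul]; exact measureReal_nonneg
  · have hmix := (le_abs_self _).trans (abs_sub_le_phiCoef P X hk hA hB hPA)
    rw [sub_le_iff_le_add, div_le_iff₀ hPA] at hmix
    nlinarith

lemma Stationary.map_eq_map_one {P : Measure Ω} {X : ℕ → Ω → ℝ} (hstat : Stationary P X)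
    (hX : ∀ i, Measurable (X i)) {k : ℕ} (hk : 1 ≤ k) : P.map (X k) = P.map (X 1) := by
  induction k, hk using Nat.le_induction with
  | base => rfl
  | succ k hk ih =>
    obtain ⟨j, rfl⟩ : ∃ j, k = j + 1 := ⟨k - 1, by omega⟩
    have hshift := congrArg (Measure.map (fun f : ℕ → ℝ => f j)) hstat
    rw [Measure.map_map (measurable_pi_apply j) (measurable_pi_lambda _ fun i => hX _),
      Measure.map_map (measurable_pi_apply j) (measurable_pi_lambda _ fun i => hX _)] at hshift
    exact hshift.trans ih

lemma Stationary.measure_preimage_eq {P : Measure Ω} {X : ℕ → Ω → ℝ} (hstat : Stationary P X)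
    (hX : ∀ i, Measurable (X i)) {k : ℕ} (hk : 1 ≤ k) {T : Set ℝ} (hT : MeasurableSet T) :
    P (X k ⁻¹' T) = P (X 1 ⁻¹' T) := by
  rw [← Measure.map_apply (hX k) hT, ← Measure.map_apply (hX 1) hT, hstat.map_eq_map_one hX hk]

lemma sum_measureReal_diff_biUnion_Ioc_le {μ : Measure Ω} [IsFiniteMeasure μ] (C : ℕ → Set Ω)
    (hC : ∀ k, MeasurableSet (C k)) (n : ℕ) :
    ∑ k ∈ Finset.Icc 1 n, μ.real (C k \ ⋃ j ∈ Finset.Ioc k n, C j) ≤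
      μ.real (⋃ k ∈ Finset.Icc 1 n, C k) := by
  set E : ℕ → Set Ω := fun k => C k \ ⋃ j ∈ Finset.Ioc k n, C j
  have hdisj_of_lt : ∀ k, ∀ l ∈ Finset.Icc 1 n, k < l → Disjoint (E k) (E l) :=
    fun k l hl hkl => disjoint_left.2 fun ω hωk hωl =>
      hωk.2 (mem_iUnion₂.2 ⟨l, Finset.mem_Ioc.2 ⟨hkl, (Finset.mem_Icc.1 hl).2⟩, hωl.1⟩)
  have hdisj : PairwiseDisjoint (Finset.Icc 1 n : Set ℕ) E := by
    intro k hk l hl hkl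
    rcases hkl.lt_or_gt with h | h
    · exact hdisj_of_lt k l hl h
    · exact (hdisj_of_lt l k hk h).symm
  rw [← measureReal_biUnion_finset hdisj
    fun k _ => (hC k).diff (Finset.measurableSet_biUnion _ fun j _ => hC j)]
  exact measureReal_mono (iUnion₂_mono fun k _ => sdiff_subset) (measure_ne_top _ _)

lemma one_sub_phiCoef_mul_le_measureReal_biUnion {P : Measure Ω} [IsFiniteMeasure P]
    {X : ℕ → Ω → ℝ} (hstat : Stationary P X) (hX : ∀ i, Measurable (X i)) {T : Set ℝ}
    (hT : MeasurableSet T) (n : ℕ) :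
    (1 - phiCoef P X 1) * (n * P.real (X 1 ⁻¹' T)) ≤
      (1 + n * P.real (X 1 ⁻¹' T)) * P.real (⋃ k ∈ Finset.Icc 1 n, X k ⁻¹' T) := by
  set U := ⋃ k ∈ Finset.Icc 1 n, X k ⁻¹' T
  have hlast : ∀ k ∈ Finset.Icc 1 n, P.real (X 1 ⁻¹' T) * (1 - phiCoef P X 1 - P.real U) ≤
      P.real (X k ⁻¹' T \ ⋃ j ∈ Finset.Ioc k n, X j ⁻¹' T) := by
    intro k hk
    obtain ⟨hk1, -⟩ := Finset.mem_Icc.1 hk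
    set F := ⋃ j ∈ Finset.Ioc k n, X j ⁻¹' T
    have hPk : P.real (X k ⁻¹' T) = P.real (X 1 ⁻¹' T) := by
      simp only [measureReal_def, hstat.measure_preimage_eq hX hk1 hT]
    have hF : MeasurableSet[blockS X (Ici (k + 1))] F :=
      Finset.measurableSet_biUnion _ fun j hj =>
        measurableSet_blockS_preimage_s6 (mem_Ici.2 (Finset.mem_Ioc.1 hj).1) hT
    have hFU : F ⊆ U := iUnion₂_mono' fun j hj =>
      ⟨j, Finset.mem_Icc.2 ⟨hk1.trans (Finset.mem_Ioc.1 hj).1.le, (Finset.mem_Ioc.1 hj).2⟩,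
        subset_rfl⟩
    calc P.real (X 1 ⁻¹' T) * (1 - phiCoef P X 1 - P.real U)
        ≤ P.real (X k ⁻¹' T) * (1 - phiCoef P X 1 - P.real F) := by
          rw [hPk]
          gcongr
          exact measure_ne_top _ _
      _ ≤ _ := measureReal_mul_sub_phiCoef_le_measureReal_diff P X hk1
          (measurableSet_blockS_preimage_s6 (mem_Icc.2 ⟨hk1, le_rfl⟩) hT) hF
          (Finset.measurableSet_biUnion _ fun j _ => hX j hT)
  have hsum := (Finset.sum_le_sum hlast).trans
    (sum_measureReal_diff_biUnion_Ioc_le (fun k => X k ⁻¹' T) (fun k => hX k hT) n)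
  rw [Finset.sum_const, Nat.card_Icc, Nat.add_sub_cancel, nsmul_eq_mul] at hsum
  linarith

lemma ofReal_one_sub_phiCoef_mul_measure_le {P : Measure Ω} [IsFiniteMeasure P]
    {X : ℕ → Ω → ℝ} (hstat : Stationary P X) (hX : ∀ i, Measurable (X i)) {T : Set ℝ}
    (hT : MeasurableSet T) (n : ℕ) {S V : Set Ω} (hS : X 1 ⁻¹' T ⊆ S)
    (hV : ∀ k ∈ Finset.Icc 1 n, X k ⁻¹' T ⊆ V) :
    ENNReal.ofReal (1 - phiCoef P X 1) * n * P (X 1 ⁻¹' T) ≤ (1 + n * P S) * P V := by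
  have hSV : P.real (X 1 ⁻¹' T) ≤ P.real S := measureReal_mono hS (measure_ne_top P S)
  have hUV : P.real (⋃ k ∈ Finset.Icc 1 n, X k ⁻¹' T) ≤ P.real V :=
    measureReal_mono (iUnion₂_subset hV) (measure_ne_top P V)
  have hreal : (1 - phiCoef P X 1) * (n * P.real (X 1 ⁻¹' T)) ≤ (1 + n * P.real S) * P.real V :=
    (one_sub_phiCoef_mul_le_measureReal_biUnion hstat hX hT n).trans <|
      mul_le_mul (add_le_add_right (mul_le_mul_of_nonneg_left hSV n.cast_nonneg) 1) hUV
        measureReal_nonneg (by positivity)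
  calc ENNReal.ofReal (1 - phiCoef P X 1) * n * P (X 1 ⁻¹' T)
      = ENNReal.ofReal ((1 - phiCoef P X 1) * (n * P.real (X 1 ⁻¹' T))) := by
        rw [ENNReal.ofReal_mul' (by positivity), ENNReal.ofReal_mul (by positivity),
          ENNReal.ofReal_natCast, ofReal_measureReal, mul_assoc]
    _ ≤ ENNReal.ofReal ((1 + n * P.real S) * P.real V) := ENNReal.ofReal_le_ofReal hreal
    _ = (1 + n * P S) * P V := by
        rw [ENNReal.ofReal_mul (by positivity), ENNReal.ofReal_add zero_le_one (by positivity),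
          ENNReal.ofReal_mul (by positivity), ENNReal.ofReal_natCast, ofReal_measureReal,
          ofReal_measureReal, ENNReal.ofReal_one]

lemma mul_lintegral_le_mul_lintegral_of_meas_lt {α β : Type*} [MeasurableSpace α]
    [MeasurableSpace β] {μ : Measure α} {ν : Measure β} {f : α → ℝ} {g : β → ℝ}
    (hf : 0 ≤ᵐ[μ] f) (hfm : AEMeasurable f μ) (hg : 0 ≤ᵐ[ν] g) (hgm : AEMeasurable g ν)
    {c d : ℝ≥0∞} (hd : d ≠ ∞) (h : ∀ t > 0, c * μ {a | t < f a} ≤ d * ν {b | t < g b}) :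
    c * ∫⁻ a, ENNReal.ofReal (f a) ∂μ ≤ d * ∫⁻ b, ENNReal.ofReal (g b) ∂ν := by
  rw [lintegral_eq_lintegral_meas_lt μ hf hfm, lintegral_eq_lintegral_meas_lt ν hg hgm,
    ← lintegral_const_mul' d _ hd]
  exact (lintegral_const_mul_le _ _).trans (setLIntegral_mono' measurableSet_Ioi h)

lemma le_ciSup₂_of_mem_finset {ι α : Type*} [ConditionallyCompleteLattice α] (f : ι → α)
    {s : Finset ι} {i : ι} (hi : i ∈ s) : f i ≤ ⨆ j ∈ s, f j :=
  le_ciSup₂ ((s.finite_toSet.image f).bddAbove.mono <| by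
    rintro _ ⟨_, ⟨j, rfl⟩, ⟨hj, rfl⟩⟩
    exact ⟨j, hj, rfl⟩) i hi

theorem stmt6_general (P : Measure Ω) [IsProbabilityMeasure P] (X : ℕ → Ω → ℝ)
    (hX : ∀ i, Measurable (X i)) (hstat : Stationary P X)
    (q x : ℝ) (hq : 0 < q) (n : ℕ) :
    ENNReal.ofReal (1 - phiCoef P X 1) * (n : ℝ≥0∞) *
        (∫⁻ ω in {ω | x < |X 1 ω|}, ENNReal.ofReal (|X 1 ω| ^ q) ∂P) /
        (1 + (n : ℝ≥0∞) * P {ω | x < |X 1 ω|}) ≤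
      ∫⁻ ω, ENNReal.ofReal ((⨆ k ∈ Finset.Icc 1 n, |X k ω|) ^ q) ∂P := by
  set M : Ω → ℝ := fun ω => ⨆ k ∈ Finset.Icc 1 n, |X k ω|
  have hM0 : ∀ ω, 0 ≤ M ω := fun ω =>
    Real.iSup_nonneg fun k => Real.iSup_nonneg fun _ => abs_nonneg _
  have hMm : Measurable M := Measurable.iSup fun k => Measurable.iSup fun _ => (hX k).abs
  have hlevel : ∀ {t a : ℝ}, 0 < t → 0 ≤ a → (t < a ^ q ↔ t ^ q⁻¹ < a) := fun ht ha =>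
    (Real.rpow_inv_lt_iff_of_pos ht.le ha hq).symm
  refine ENNReal.div_le_of_le_mul' <| mul_lintegral_le_mul_lintegral_of_meas_lt
    (ae_of_all _ fun ω => by positivity) (by fun_prop)
    (ae_of_all _ fun ω => Real.rpow_nonneg (hM0 ω) q) (by fun_prop) (by finiteness)
    fun t ht => ?_
  set y := max x (t ^ q⁻¹)
  have htail : {ω | t < |X 1 ω| ^ q} ∩ {ω | x < |X 1 ω|} = X 1 ⁻¹' {v | y < |v|} := by
    ext ω
    simp [y, hlevel ht (abs_nonneg _), and_comm]
  rw [Measure.restrict_apply (measurableSet_lt measurable_const (by fun_prop)), htail]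
  exact ofReal_one_sub_phiCoef_mul_measure_le hstat hX
    (measurableSet_lt measurable_const measurable_id.abs) n
    (fun ω (hω : y < |X 1 ω|) => show x < _ from (le_max_left _ _).trans_lt hω)
    fun k hk ω hω => (hlevel ht (hM0 ω)).2 <|
      (le_max_right _ _).trans_lt (hω.trans_le (le_ciSup₂_of_mem_finset _ hk))

theorem stmt6 (P : Measure Ω) [IsProbabilityMeasure P] (X : ℕ → Ω → ℝ)
    (hX : ∀ i, Measurable (X i)) (hstat : Stationary P X)
    (hphi : phiCoef P X 1 < 1)
    (hunbd : ∀ x : ℝ, (P {ω | |X 1 ω| ≤ x}).toReal < 1)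
    (q x : ℝ) (hq : 0 < q) (hx : 0 < x) (n : ℕ) (hn : 1 ≤ n) :
    ENNReal.ofReal (1 - phiCoef P X 1) * (n : ℝ≥0∞) *
        (∫⁻ ω in {ω | x < |X 1 ω|}, ENNReal.ofReal (|X 1 ω| ^ q) ∂P) /
        (1 + (n : ℝ≥0∞) * P {ω | x < |X 1 ω|}) ≤
      ∫⁻ ω, ENNReal.ofReal ((⨆ k ∈ Finset.Icc 1 n, |X k ω|) ^ q) ∂P :=
  stmt6_general P X hX hstat q x hq n
end

section
/- Let X be a real random variable with E|X| < ∞, and X̃ an independent copy of X; write X̂ = X − X̃. If the truncated second moment function x ↦ E[X̂²·1_{|X̂| ≤ x}] is slowly varying (in the sense of Karamata) as x → ∞, then x ↦ E[X²·1_{|X| ≤ x}] is also slowly varying. -/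
open MeasureTheory Filter Set ProbabilityTheory

variable {Ω : Type*} [MeasurableSpace Ω]

/-!
Write `H_Y(x) = E[Y²; |Y| ≤ x]` and `T_Y(x) = P(|Y| > x)`. By Feller's criterion, `H_Y` is slowly
varying iff `x² T_Y(x) = o(H_Y(x))`. For the slowly varying `H_X̂` this follows by summing
`(2ᵏy)² (T(2ᵏy) - T(2ᵏ⁺¹y)) ≤ H(2ᵏ⁺¹y) - H(2ᵏy) ≤ δ (1 + δ)ᵏ H(y)` over `k`. It transfers to `X`
through the weak symmetrization inequality `T_X(x) ≤ 2 T_X̂(x/2)` (for large `x`, by independence)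
and `H_X̂(x) ≤ 4 H_X(x) + 2 x² T_X(x)` (as `X̃` is a copy of `X`).
-/

open Asymptotics Topology

noncomputable def truncSecondMoment (P : Measure Ω) (Y : Ω → ℝ) (x : ℝ) : ℝ :=
  ∫ ω in {ω | |Y ω| ≤ x}, Y ω ^ 2 ∂P

noncomputable def tailProb (P : Measure Ω) (Y : Ω → ℝ) (x : ℝ) : ℝ :=
  P.real {ω | x < |Y ω|}

lemma Measurable.measurableSet_abs_le {Y : Ω → ℝ} (hY : Measurable Y) (x : ℝ) :
    MeasurableSet {ω | |Y ω| ≤ x} :=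
  measurableSet_le hY.abs measurable_const

lemma Measurable.measurableSet_lt_abs {Y : Ω → ℝ} (hY : Measurable Y) (x : ℝ) :
    MeasurableSet {ω | x < |Y ω|} :=
  measurableSet_lt measurable_const hY.abs

section Truncation

variable {P : Measure Ω} {Y : Ω → ℝ}

lemma truncSecondMoment_nonneg (x : ℝ) : 0 ≤ truncSecondMoment P Y x :=
  integral_nonneg fun _ => sq_nonneg _

lemma tailProb_nonneg (x : ℝ) : 0 ≤ tailProb P Y x :=
  measureReal_nonneg

variable [IsFiniteMeasure P]

lemma integrableOn_sq_abs_le (hY : Measurable Y) (x : ℝ) :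
    IntegrableOn (fun ω => Y ω ^ 2) {ω | |Y ω| ≤ x} P := by
  refine Measure.integrableOn_of_bounded (M := x ^ 2) (measure_ne_top P _)
    (hY.pow_const 2).aestronglyMeasurable ?_
  filter_upwards [ae_restrict_mem (hY.measurableSet_abs_le x)] with ω hω
  rw [Real.norm_of_nonneg (sq_nonneg _), ← sq_abs]
  exact pow_le_pow_left₀ (abs_nonneg _) hω 2

lemma truncSecondMoment_mono (hY : Measurable Y) : Monotone (truncSecondMoment P Y) :=
  fun _ b hab => setIntegral_mono_set (integrableOn_sq_abs_le hY b)
    (Eventually.of_forall fun _ => sq_nonneg _)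
    (LE.le.eventuallyLE fun _ hω => le_trans hω hab)

lemma tailProb_antitone : Antitone (tailProb P Y) :=
  fun _ _ hab => measureReal_mono fun _ hω => lt_of_le_of_lt hab hω

lemma tendsto_tailProb_atTop (hY : Measurable Y) : Tendsto (tailProb P Y) atTop (𝓝 0) := by
  have hempty : ⋂ x : ℝ, {ω | x < |Y ω|} = ∅ :=
    iInter_eq_empty_iff.2 fun ω => ⟨|Y ω|, lt_irrefl (|Y ω|)⟩
  have h := tendsto_measure_iInter_atTop (μ := P)
    (fun x => (hY.measurableSet_lt_abs x).nullMeasurableSet)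
    (fun _ _ hab _ hω => lt_of_le_of_lt hab hω) ⟨0, measure_ne_top P _⟩
  rw [hempty, measure_empty] at h
  exact (ENNReal.tendsto_toReal ENNReal.zero_ne_top).comp h

section Annulus

variable {a b : ℝ}

lemma truncSecondMoment_sub_eq (hY : Measurable Y) (hab : a ≤ b) :
    truncSecondMoment P Y b - truncSecondMoment P Y a =
      ∫ ω in {ω | |Y ω| ≤ b} \ {ω | |Y ω| ≤ a}, Y ω ^ 2 ∂P :=
  (setIntegral_sdiff (hY.measurableSet_abs_le a) (integrableOn_sq_abs_le hY b)
    fun _ hω => le_trans hω hab).symm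

lemma tailProb_sub_eq (hY : Measurable Y) (hab : a ≤ b) :
    tailProb P Y a - tailProb P Y b = P.real ({ω | |Y ω| ≤ b} \ {ω | |Y ω| ≤ a}) := by
  have hset : {ω | |Y ω| ≤ b} \ {ω | |Y ω| ≤ a} = {ω | a < |Y ω|} \ {ω | b < |Y ω|} := by
    ext ω
    simp only [Set.mem_sdiff, mem_ofPred_eq, not_le, not_lt, and_comm]
  have hsub : {ω | b < |Y ω|} ⊆ {ω | a < |Y ω|} := fun _ hω => lt_of_le_of_lt hab hω
  rw [hset, measureReal_sdiff hsub (hY.measurableSet_lt_abs b)]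
  rfl

lemma sq_mul_sub_tailProb_le (hY : Measurable Y) (ha : 0 ≤ a) (hab : a ≤ b) :
    a ^ 2 * (tailProb P Y a - tailProb P Y b) ≤
      truncSecondMoment P Y b - truncSecondMoment P Y a := by
  rw [tailProb_sub_eq hY hab, truncSecondMoment_sub_eq hY hab]
  refine setIntegral_ge_of_const_le_real
    ((hY.measurableSet_abs_le b).diff (hY.measurableSet_abs_le a)) (measure_ne_top P _)
    (fun ω hω => ?_) ((integrableOn_sq_abs_le hY b).mono_set sdiff_subset)
  rw [← sq_abs (Y ω)]
  exact pow_le_pow_left₀ ha (not_le.1 hω.2).le 2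

lemma truncSecondMoment_sub_le (hY : Measurable Y) (hab : a ≤ b) :
    truncSecondMoment P Y b - truncSecondMoment P Y a ≤ b ^ 2 * tailProb P Y a := by
  have hA := (hY.measurableSet_abs_le b).diff (hY.measurableSet_abs_le a)
  calc truncSecondMoment P Y b - truncSecondMoment P Y a
      ≤ ∫ _ in {ω | |Y ω| ≤ b} \ {ω | |Y ω| ≤ a}, b ^ 2 ∂P := by
        rw [truncSecondMoment_sub_eq hY hab]
        refine setIntegral_mono_on ((integrableOn_sq_abs_le hY b).mono_set sdiff_subset)
          (integrableOn_const (measure_ne_top P _)) hA fun ω hω => ?_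
        rw [← sq_abs]
        exact pow_le_pow_left₀ (abs_nonneg _) hω.1 2
    _ = b ^ 2 * (tailProb P Y a - tailProb P Y b) := by
        rw [setIntegral_const, smul_eq_mul, mul_comm, tailProb_sub_eq hY hab]
    _ ≤ b ^ 2 * tailProb P Y a := by
        have := tailProb_nonneg (P := P) (Y := Y) b
        gcongr
        linarith

end Annulus

end Truncation

section Feller

lemma eventually_pos_of_tendsto_div {f : ℝ → ℝ} (hf : ∀ x, 0 ≤ f x) {l : ℝ}
    (h : Tendsto (fun x => f (l * x) / f x) atTop (𝓝 1)) : ∀ᶠ x in atTop, 0 < f x :=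
  (h.eventually_ne one_ne_zero).mono fun x hx =>
    (hf x).lt_of_ne' fun h0 => hx (by rw [h0, div_zero])

lemma le_pow_mul_of_doubling {f : ℝ → ℝ} {C y₀ y : ℝ} (hC : 0 ≤ C)
    (hf : ∀ z ≥ y₀, f (2 * z) ≤ C * f z) (hy₀ : y₀ ≤ y) (hy : 0 ≤ y) (k : ℕ) :
    f (2 ^ k * y) ≤ C ^ k * f y := by
  induction k with
  | zero => simp
  | succ k ih =>
    have hk : y₀ ≤ 2 ^ k * y := hy₀.trans (le_mul_of_one_le_left hy (one_le_pow₀ one_le_two))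
    calc f (2 ^ (k + 1) * y) = f (2 * (2 ^ k * y)) := by ring_nf
      _ ≤ C * f (2 ^ k * y) := hf _ hk
      _ ≤ C * (C ^ k * f y) := by gcongr
      _ = C ^ (k + 1) * f y := by ring

lemma le_div_of_sub_succ_le_geometric {s : ℕ → ℝ} {c r : ℝ} (hs : Tendsto s atTop (𝓝 0))
    (hc : 0 ≤ c) (hr₀ : 0 ≤ r) (hr₁ : r < 1) (h : ∀ k, s k - s (k + 1) ≤ c * r ^ k) :
    s 0 ≤ c / (1 - r) := by
  have hpartial : ∀ N, s 0 - s N ≤ c / (1 - r) := fun N => by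
    rw [← Finset.sum_range_sub', ← mul_one_div]
    calc ∑ k ∈ Finset.range N, (s k - s (k + 1)) ≤ ∑ k ∈ Finset.range N, c * r ^ k :=
          Finset.sum_le_sum fun k _ => h k
      _ = c * ∑ k ∈ Finset.Ico 0 N, r ^ k := by rw [Finset.mul_sum, Finset.range_eq_Ico]
      _ ≤ c * (1 / (1 - r)) := by
          gcongr
          simpa using geom_sum_Ico_le_of_lt_one (m := 0) (n := N) hr₀ hr₁
  simpa using le_of_tendsto' (tendsto_const_nhds.sub hs) hpartial

variable {P : Measure Ω} [IsFiniteMeasure P] {Y : Ω → ℝ}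

lemma sq_mul_tailProb_le_of_doubling (hY : Measurable Y) {δ y₀ y : ℝ} (hδ₀ : 0 ≤ δ)
    (hδ₁ : δ ≤ 1)
    (hdouble : ∀ z ≥ y₀, truncSecondMoment P Y (2 * z) ≤ (1 + δ) * truncSecondMoment P Y z)
    (hy₀ : y₀ ≤ y) (hy : 0 < y) :
    y ^ 2 * tailProb P Y y ≤ 2 * δ * truncSecondMoment P Y y := by
  set H := truncSecondMoment P Y
  set r := (1 + δ) / 4 with hr
  have hstep : ∀ k : ℕ, tailProb P Y (2 ^ k * y) - tailProb P Y (2 ^ (k + 1) * y) ≤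
      δ * H y / y ^ 2 * r ^ k := fun k => by
    have hk : 0 < 2 ^ k * y := by positivity
    have hkk : 2 ^ (k + 1) * y = 2 * (2 ^ k * y) := by ring
    have hinc : H (2 ^ (k + 1) * y) - H (2 ^ k * y) ≤ δ * ((1 + δ) ^ k * H y) := by
      have h1 := hdouble (2 ^ k * y)
        (hy₀.trans (le_mul_of_one_le_left hy.le (one_le_pow₀ one_le_two)))
      have h2 := le_pow_mul_of_doubling (by linarith) hdouble hy₀ hy.le k
      rw [hkk]
      nlinarith
    rw [show δ * H y / y ^ 2 * r ^ k = δ * ((1 + δ) ^ k * H y) / (2 ^ k * y) ^ 2 by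
      simp only [r, div_pow, mul_pow]; field_simp; rw [← pow_mul, pow_mul']; norm_num,
      le_div_iff₀' (by positivity)]
    exact (sq_mul_sub_tailProb_le hY hk.le (by rw [hkk]; linarith)).trans hinc
  have hlim : Tendsto (fun k : ℕ => tailProb P Y (2 ^ k * y)) atTop (𝓝 0) :=
    (tendsto_tailProb_atTop hY).comp
      ((tendsto_pow_atTop_atTop_of_one_lt one_lt_two).atTop_mul_const hy)
  have hT := le_div_of_sub_succ_le_geometric hlim
    (div_nonneg (mul_nonneg hδ₀ (truncSecondMoment_nonneg y)) (sq_nonneg y))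
    (by positivity) (by rw [hr]; linarith) hstep
  simp only [pow_zero, one_mul] at hT
  rw [le_div_iff₀ (by rw [hr]; linarith), le_div_iff₀ (by positivity), hr] at hT
  nlinarith [mul_nonneg (sub_nonneg.2 hδ₁)
    (mul_nonneg (sq_nonneg y) (tailProb_nonneg (P := P) (Y := Y) y))]

theorem isLittleO_sq_mul_tailProb_of_tendsto (hY : Measurable Y)
    (h2 : Tendsto (fun x => truncSecondMoment P Y (2 * x) / truncSecondMoment P Y x) atTop
      (𝓝 1)) :
    (fun x => x ^ 2 * tailProb P Y x) =o[atTop] truncSecondMoment P Y := by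
  refine IsLittleO.of_bound fun c hc => ?_
  set δ := min 1 (c / 2)
  have hδ : 0 < δ := lt_min one_pos (half_pos hc)
  have hdouble : ∀ᶠ z in atTop,
      truncSecondMoment P Y (2 * z) ≤ (1 + δ) * truncSecondMoment P Y z := by
    filter_upwards [h2.eventually (eventually_lt_nhds (by linarith : (1 : ℝ) < 1 + δ)),
      eventually_pos_of_tendsto_div truncSecondMoment_nonneg h2] with z hlt hpos
    exact ((div_lt_iff₀ hpos).1 hlt).le
  obtain ⟨y₀, hy₀⟩ := eventually_atTop.1 hdouble
  filter_upwards [eventually_ge_atTop y₀, eventually_gt_atTop 0] with y hy hy0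
  rw [Real.norm_of_nonneg (mul_nonneg (sq_nonneg y) (tailProb_nonneg y)),
    Real.norm_of_nonneg (truncSecondMoment_nonneg y)]
  calc y ^ 2 * tailProb P Y y ≤ 2 * δ * truncSecondMoment P Y y :=
        sq_mul_tailProb_le_of_doubling hY hδ.le (min_le_left _ _) hy₀ hy hy0
    _ ≤ c * truncSecondMoment P Y y := by
        gcongr
        · exact truncSecondMoment_nonneg y
        · linarith [min_le_right 1 (c / 2)]

lemma tendsto_div_of_isLittleO_of_one_le (hY : Measurable Y)
    (hpos : ∀ᶠ x in atTop, 0 < truncSecondMoment P Y x)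
    (hF : (fun x => x ^ 2 * tailProb P Y x) =o[atTop] truncSecondMoment P Y) {l : ℝ}
    (hl : 1 ≤ l) :
    Tendsto (fun x => truncSecondMoment P Y (l * x) / truncSecondMoment P Y x) atTop (𝓝 1) := by
  have hO : (fun x => truncSecondMoment P Y (l * x) - truncSecondMoment P Y x) =O[atTop]
      fun x => x ^ 2 * tailProb P Y x := by
    refine IsBigO.of_bound (l ^ 2) ?_
    filter_upwards [eventually_ge_atTop 0] with x hx
    have hlx : x ≤ l * x := le_mul_of_one_le_left hx hl
    rw [Real.norm_of_nonneg (sub_nonneg.2 (truncSecondMoment_mono hY hlx)),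
      Real.norm_of_nonneg (mul_nonneg (sq_nonneg x) (tailProb_nonneg x))]
    linarith [truncSecondMoment_sub_le (P := P) hY hlx]
  have h0 := (hO.trans_isLittleO hF).tendsto_div_nhds_zero.add_const 1
  rw [zero_add] at h0
  refine h0.congr' ?_
  filter_upwards [hpos] with x hx
  field_simp
  ring

theorem slowlyVarying_of_isLittleO (hY : Measurable Y)
    (hpos : ∀ᶠ x in atTop, 0 < truncSecondMoment P Y x)
    (hF : (fun x => x ^ 2 * tailProb P Y x) =o[atTop] truncSecondMoment P Y) :
    SlowlyVarying (truncSecondMoment P Y) := by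
  intro l hl
  rcases le_or_gt 1 l with h1 | h1
  · exact tendsto_div_of_isLittleO_of_one_le hY hpos hF h1
  · have h := ((tendsto_div_of_isLittleO_of_one_le hY hpos hF
      ((one_le_inv₀ hl).2 h1.le)).comp (tendsto_id.const_mul_atTop hl)).inv₀ one_ne_zero
    simpa [Function.comp_def, inv_mul_cancel_left₀ hl.ne', inv_div] using h

end Feller

section Symmetrization

variable {P : Measure Ω} {X Xt : Ω → ℝ}

lemma truncSecondMoment_eq_of_map_eq (hX : Measurable X) (hXt : Measurable Xt)
    (hcopy : P.map Xt = P.map X) : truncSecondMoment P Xt = truncSecondMoment P X := by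
  funext x
  have hlaw : ∀ Y : Ω → ℝ, Measurable Y →
      truncSecondMoment P Y x = ∫ t in {t : ℝ | |t| ≤ x}, t ^ 2 ∂P.map Y := fun _ hY =>
    (setIntegral_map (measurableSet_le measurable_abs measurable_const)
      (continuous_pow 2).aestronglyMeasurable hY.aemeasurable).symm
  rw [hlaw Xt hXt, hlaw X hX, hcopy]

lemma tailProb_eq_of_map_eq (hX : Measurable X) (hXt : Measurable Xt)
    (hcopy : P.map Xt = P.map X) : tailProb P Xt = tailProb P X := by
  funext x
  have hlaw : ∀ Y : Ω → ℝ, Measurable Y → tailProb P Y x = (P.map Y).real {t | x < |t|} :=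
    fun _ hY => (map_measureReal_apply hY (measurableSet_lt measurable_const measurable_abs)).symm
  rw [hlaw Xt hXt, hlaw X hX, hcopy]

section Finite

variable [IsFiniteMeasure P]

lemma truncSecondMoment_sub_le_add (hX : Measurable X) (hXt : Measurable Xt) (x : ℝ) :
    truncSecondMoment P (X - Xt) x ≤ 2 * truncSecondMoment P X x +
      2 * truncSecondMoment P Xt x + x ^ 2 * (tailProb P X x + tailProb P Xt x) := by
  set S := {ω | |(X - Xt) ω| ≤ x}
  set A := {ω | |X ω| ≤ x}
  set B := {ω | |Xt ω| ≤ x}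
  have hSm : MeasurableSet S := (hX.sub hXt).measurableSet_abs_le x
  have hAB : MeasurableSet (A ∩ B) := (hX.measurableSet_abs_le x).inter (hXt.measurableSet_abs_le x)
  have hS : IntegrableOn (fun ω => (X - Xt) ω ^ 2) S P := integrableOn_sq_abs_le (hX.sub hXt) x
  have hXA : IntegrableOn (fun ω => X ω ^ 2) (S ∩ (A ∩ B)) P :=
    (integrableOn_sq_abs_le hX x).mono_set (inter_subset_right.trans inter_subset_left)
  have hXtB : IntegrableOn (fun ω => Xt ω ^ 2) (S ∩ (A ∩ B)) P :=
    (integrableOn_sq_abs_le hXt x).mono_set (inter_subset_right.trans inter_subset_right)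
  have hinner : ∫ ω in S ∩ (A ∩ B), (X - Xt) ω ^ 2 ∂P ≤
      2 * truncSecondMoment P X x + 2 * truncSecondMoment P Xt x := calc
    _ ≤ ∫ ω in S ∩ (A ∩ B), (2 * X ω ^ 2 + 2 * Xt ω ^ 2) ∂P :=
        setIntegral_mono_on (hS.mono_set inter_subset_left) ((hXA.const_mul 2).fun_add
          (hXtB.const_mul 2)) (hSm.inter hAB) fun ω _ => by
            simp only [Pi.sub_apply]; nlinarith [sq_nonneg (X ω + Xt ω)]
    _ = 2 * ∫ ω in S ∩ (A ∩ B), X ω ^ 2 ∂P + 2 * ∫ ω in S ∩ (A ∩ B), Xt ω ^ 2 ∂P := by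
        rw [integral_add (hXA.const_mul 2) (hXtB.const_mul 2), integral_const_mul,
          integral_const_mul]
    _ ≤ _ := by
        gcongr <;> refine setIntegral_mono_set (integrableOn_sq_abs_le ‹_› x)
          (Eventually.of_forall fun _ => sq_nonneg _) (LE.le.eventuallyLE ?_)
        exacts [inter_subset_right.trans inter_subset_left,
          inter_subset_right.trans inter_subset_right]
  have houter : ∫ ω in S \ (A ∩ B), (X - Xt) ω ^ 2 ∂P ≤
      x ^ 2 * (tailProb P X x + tailProb P Xt x) := calc
    _ ≤ ∫ _ in S \ (A ∩ B), x ^ 2 ∂P :=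
        setIntegral_mono_on (hS.mono_set sdiff_subset) (integrableOn_const (measure_ne_top P _))
          (hSm.diff hAB) fun ω hω => by rw [← sq_abs]; exact pow_le_pow_left₀ (abs_nonneg _) hω.1 2
    _ = x ^ 2 * P.real (S \ (A ∩ B)) := by rw [setIntegral_const, smul_eq_mul, mul_comm]
    _ ≤ x ^ 2 * P.real ({ω | x < |X ω|} ∪ {ω | x < |Xt ω|}) := by
        refine mul_le_mul_of_nonneg_left (measureReal_mono fun ω hω => ?_) (sq_nonneg x)
        simpa only [A, B, mem_inter_iff, mem_ofPred_eq, not_and_or, not_le, mem_union]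
          using hω.2
    _ ≤ _ := by gcongr; exact measureReal_union_le _ _
  change ∫ ω in S, (X - Xt) ω ^ 2 ∂P ≤ _
  rw [← integral_inter_add_sdiff hAB hS]
  linarith

lemma truncSecondMoment_sub_le_of_map_eq (hX : Measurable X) (hXt : Measurable Xt)
    (hcopy : P.map Xt = P.map X) (x : ℝ) :
    truncSecondMoment P (X - Xt) x ≤
      4 * truncSecondMoment P X x + 2 * (x ^ 2 * tailProb P X x) := by
  have h := truncSecondMoment_sub_le_add (P := P) hX hXt x
  rw [truncSecondMoment_eq_of_map_eq hX hXt hcopy, tailProb_eq_of_map_eq hX hXt hcopy] at h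
  linarith

lemma eventually_truncSecondMoment_pos_of_sub (hX : Measurable X) (hXt : Measurable Xt)
    (hcopy : P.map Xt = P.map X) (hZpos : ∀ᶠ x in atTop, 0 < truncSecondMoment P (X - Xt) x)
    (hF : (fun x => x ^ 2 * tailProb P X x) =o[atTop] truncSecondMoment P X) :
    ∀ᶠ x in atTop, 0 < truncSecondMoment P X x := by
  filter_upwards [hZpos, hF.bound one_pos] with x hx hFx
  rw [Real.norm_of_nonneg (mul_nonneg (sq_nonneg x) (tailProb_nonneg x)),
    Real.norm_of_nonneg (truncSecondMoment_nonneg x)] at hFx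
  linarith [truncSecondMoment_sub_le_of_map_eq hX hXt hcopy x]

lemma tailProb_mul_le_tailProb_sub (hindep : IndepFun X Xt P) (x a : ℝ) :
    tailProb P X x * P.real {ω | |Xt ω| ≤ a} ≤ tailProb P (X - Xt) (x - a) := by
  have hsub : {ω | x < |X ω|} ∩ {ω | |Xt ω| ≤ a} ⊆ {ω | x - a < |(X - Xt) ω|} := by
    rintro ω ⟨h1, h2⟩
    have := abs_sub_abs_le_abs_sub (X ω) (Xt ω)
    simp only [mem_ofPred_eq, Pi.sub_apply] at h1 h2 ⊢
    linarith
  calc tailProb P X x * P.real {ω | |Xt ω| ≤ a}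
      = P.real ({ω | x < |X ω|} ∩ {ω | |Xt ω| ≤ a}) := by
        rw [tailProb, measureReal_def, measureReal_def, measureReal_def, ← ENNReal.toReal_mul,
          show {ω | x < |X ω|} ∩ {ω | |Xt ω| ≤ a} =
          X ⁻¹' {t | x < |t|} ∩ Xt ⁻¹' {t | |t| ≤ a} from rfl,
          hindep.measure_inter_preimage_eq_mul _ _
            (measurableSet_lt measurable_const measurable_abs)
            (measurableSet_le measurable_abs measurable_const)]
        rfl
    _ ≤ tailProb P (X - Xt) (x - a) := measureReal_mono hsub

end Finite

variable [IsProbabilityMeasure P]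

lemma eventually_tailProb_le_two_mul (hXt : Measurable Xt)
    (hindep : IndepFun X Xt P) :
    ∀ᶠ x in atTop, tailProb P X x ≤ 2 * tailProb P (X - Xt) (x / 2) := by
  obtain ⟨a, ha⟩ := eventually_atTop.1 ((tendsto_tailProb_atTop (P := P) hXt).eventually
    (eventually_le_nhds (by norm_num : (0 : ℝ) < 1 / 2)))
  have hhalf : 1 / 2 ≤ P.real {ω | |Xt ω| ≤ a} := by
    have hcompl : {ω | |Xt ω| ≤ a} = {ω | a < |Xt ω|}ᶜ := by ext; simp
    rw [hcompl, probReal_compl_eq_one_sub (hXt.measurableSet_lt_abs a)]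
    linarith [ha a le_rfl, show tailProb P Xt a = P.real {ω | a < |Xt ω|} from rfl]
  filter_upwards [eventually_ge_atTop (2 * a)] with x hx
  calc tailProb P X x ≤ 2 * (tailProb P X x * P.real {ω | |Xt ω| ≤ a}) := by
        nlinarith [tailProb_nonneg (P := P) (Y := X) x]
    _ ≤ 2 * tailProb P (X - Xt) (x - a) := by
        gcongr; exact tailProb_mul_le_tailProb_sub hindep x a
    _ ≤ 2 * tailProb P (X - Xt) (x / 2) := by gcongr; exact tailProb_antitone (by linarith)

theorem isLittleO_sq_mul_tailProb_of_sub (hX : Measurable X) (hXt : Measurable Xt)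
    (hcopy : P.map Xt = P.map X) (hindep : IndepFun X Xt P)
    (hZ : (fun x => x ^ 2 * tailProb P (X - Xt) x) =o[atTop] truncSecondMoment P (X - Xt)) :
    (fun x => x ^ 2 * tailProb P X x) =o[atTop] truncSecondMoment P X := by
  refine IsLittleO.of_bound fun c hc => ?_
  set η := min (c / 64) (1 / 32)
  have hη : 0 < η := lt_min (by positivity) (by norm_num)
  filter_upwards [(hZ.comp_tendsto (tendsto_id.atTop_div_const two_pos)).bound hη,
    eventually_tailProb_le_two_mul hXt hindep, eventually_ge_atTop 0] with x hZx hTx hx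
  have hZ0 := truncSecondMoment_nonneg (P := P) (Y := X - Xt) (x / 2)
  have hX0 := truncSecondMoment_nonneg (P := P) (Y := X) x
  have hT0 := mul_nonneg (sq_nonneg x) (tailProb_nonneg (P := P) (Y := X) x)
  simp only [Function.comp_apply, id, Real.norm_of_nonneg hZ0,
    Real.norm_of_nonneg (mul_nonneg (sq_nonneg _) (tailProb_nonneg _))] at hZx
  rw [Real.norm_of_nonneg hT0, Real.norm_of_nonneg hX0]
  -- `η ≤ 1/32` lets the left side absorb the term `16 η x² T_X(x)` of the right side.
  have hchain : x ^ 2 * tailProb P X x ≤ 8 * η * (4 * truncSecondMoment P X x +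
      2 * (x ^ 2 * tailProb P X x)) := calc
    x ^ 2 * tailProb P X x ≤ 8 * ((x / 2) ^ 2 * tailProb P (X - Xt) (x / 2)) := by
        nlinarith [sq_nonneg x]
    _ ≤ 8 * η * truncSecondMoment P (X - Xt) (x / 2) := by linarith
    _ ≤ 8 * η * truncSecondMoment P (X - Xt) x := by
        gcongr; exact truncSecondMoment_mono (hX.sub hXt) (by linarith)
    _ ≤ _ := by gcongr; exact truncSecondMoment_sub_le_of_map_eq hX hXt hcopy x
  nlinarith [mul_nonneg (sub_nonneg.2 (min_le_right (c / 64) (1 / 32))) hT0,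
    mul_le_mul_of_nonneg_right (min_le_left (c / 64) (1 / 32)) hX0]

end Symmetrization

theorem stmt8_general (P : Measure Ω) [IsProbabilityMeasure P] (X Xt : Ω → ℝ)
    (hX : Measurable X) (hXt : Measurable Xt)
    (hcopy : Measure.map Xt P = Measure.map X P) (hindep : IndepFun X Xt P)
    (hslow : SlowlyVarying fun x =>
      ∫ ω in {ω | |X ω - Xt ω| ≤ x}, (X ω - Xt ω) ^ 2 ∂P) :
    SlowlyVarying fun x => ∫ ω in {ω | |X ω| ≤ x}, (X ω) ^ 2 ∂P := by
  have hratio : Tendsto (fun x => truncSecondMoment P (X - Xt) (2 * x) /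
      truncSecondMoment P (X - Xt) x) atTop (𝓝 1) := hslow 2 two_pos
  have hZF := isLittleO_sq_mul_tailProb_of_tendsto (hX.sub hXt) hratio
  have hXF := isLittleO_sq_mul_tailProb_of_sub hX hXt hcopy hindep hZF
  have hXpos := eventually_truncSecondMoment_pos_of_sub hX hXt hcopy
    (eventually_pos_of_tendsto_div truncSecondMoment_nonneg hratio) hXF
  exact slowlyVarying_of_isLittleO hX hXpos hXF

theorem stmt8 (P : Measure Ω) [IsProbabilityMeasure P] (X Xt : Ω → ℝ)
    (hX : Measurable X) (hXt : Measurable Xt) (hint : Integrable X P)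
    (hcopy : Measure.map Xt P = Measure.map X P) (hindep : IndepFun X Xt P)
    (hslow : SlowlyVarying fun x =>
      ∫ ω in {ω | |X ω - Xt ω| ≤ x}, (X ω - Xt ω) ^ 2 ∂P) :
    SlowlyVarying fun x => ∫ ω in {ω | |X ω| ≤ x}, (X ω) ^ 2 ∂P :=
  stmt8_general P X Xt hX hXt hcopy hindep hslow
end

section
/- Let (c_n) be a positive sequence with ((n−1)/c_{n−1}²)·(c_n² − c_{n−1}²) ≥ c > 1 for all n > 1, and let Z be a real random variable with n·P[|Z| > c_n] → 0. Then (n/c_n²)·E[Z²·1_{|Z| ≤ c_n}] → 0 as n → ∞. -/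
/-!
Put `a k = c (k + 1) ^ 2` and `q j = P(|Z| > c (j + 1))`. For `0 ≤ s ≤ t` one has
`min (x², t²) ≤ min (x², s²) + (t² - s²) 1{|x| > s}`, so summation by parts gives
`E[Z²; |Z| ≤ c (m + 1)] ≤ a 0 + ∑_{j<m} (a (j + 1) - a j) q j`.
The growth condition `κ a k ≤ (k + 1) (a (k + 1) - a k)` makes `r k = a k / (k + 1)` increase
with `r (k + 1) - r k ≥ (κ - 1) r k / (k + 2)`, so `r → ∞` along the harmonic series, and it
gives `(a (j + 1) - a j) / (j + 1) ≤ 2κ/(κ - 1) (r (j + 1) - r j)`. Hence the weights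
`(m + 1) / a m · (a (j + 1) - a j) / (j + 1)` have bounded row sums and vanishing columns, and the
Toeplitz lemma applied to `(j + 1) q j → 0` concludes.
-/

open MeasureTheory Filter Set ProbabilityTheory

variable {Ω : Type*} [MeasurableSpace Ω]

open Topology

lemma tendsto_sum_range_mul_of_tendsto_zero {w : ℕ → ℕ → ℝ} {x : ℕ → ℝ} {B : ℝ}
    (hw : ∀ n j, 0 ≤ w n j) (hB : ∀ n, ∑ j ∈ Finset.range n, w n j ≤ B)
    (hcol : ∀ j, Tendsto (fun n => w n j) atTop (𝓝 0)) (hx : Tendsto x atTop (𝓝 0)) :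
    Tendsto (fun n => ∑ j ∈ Finset.range n, w n j * x j) atTop (𝓝 0) := by
  have hB0 : 0 ≤ B := by simpa using hB 0
  rw [Metric.tendsto_atTop]
  intro ε hε
  set δ := ε / (2 * (B + 1))
  have hδ : 0 < δ := by positivity
  obtain ⟨M, hM⟩ := Metric.tendsto_atTop.1 hx δ hδ
  have hhead : Tendsto (fun n => ∑ j ∈ Finset.range M, w n j * x j) atTop (𝓝 0) := by
    simpa using tendsto_finsetSum _ fun j _ => (hcol j).mul_const (x j)
  obtain ⟨N, hN⟩ := Metric.tendsto_atTop.1 hhead (ε / 2) (half_pos hε)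
  refine ⟨max M N, fun n hn => ?_⟩
  have htail : |∑ j ∈ Finset.Ico M n, w n j * x j| ≤ B * δ := calc
    |∑ j ∈ Finset.Ico M n, w n j * x j| ≤ ∑ j ∈ Finset.Ico M n, w n j * δ := by
      refine (Finset.abs_sum_le_sum_abs _ _).trans (Finset.sum_le_sum fun j hj => ?_)
      have hxj := hM j (Finset.mem_Ico.1 hj).1
      rw [Real.dist_eq, sub_zero] at hxj
      rw [abs_mul, abs_of_nonneg (hw n j)]
      exact mul_le_mul_of_nonneg_left hxj.le (hw n j)
    _ ≤ B * δ := by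
      rw [← Finset.sum_mul]
      gcongr
      exact (Finset.sum_le_sum_of_subset_of_nonneg
        (fun j hj => Finset.mem_range.2 (Finset.mem_Ico.1 hj).2)
        fun j _ _ => hw n j).trans (hB n)
  have hBδ : B * δ < ε / 2 := by
    rw [mul_div_assoc', div_lt_div_iff₀ (by positivity) two_pos]
    nlinarith
  have hhead_n := hN n (le_of_max_le_right hn)
  rw [Real.dist_eq, sub_zero] at hhead_n ⊢
  rw [← Finset.sum_range_add_sum_Ico _ (le_of_max_le_left hn)]
  calc _ ≤ |∑ j ∈ Finset.range M, w n j * x j| + |∑ j ∈ Finset.Ico M n, w n j * x j| :=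
        abs_add_le _ _
    _ < ε / 2 + ε / 2 := add_lt_add_of_lt_of_le hhead_n (htail.trans hBδ.le)
    _ = ε := add_halves ε

section Growth

variable {a : ℕ → ℝ} {κ : ℝ} {k : ℕ}

lemma monotone_of_mul_le_succ_mul_sub (hκ : 0 < κ) (ha : 0 ≤ a 0)
    (h : ∀ k : ℕ, κ * a k ≤ (k + 1) * (a (k + 1) - a k)) : Monotone a := by
  have step : ∀ k, 0 ≤ a k → a k ≤ a (k + 1) := fun k hk => by
    have := h k
    nlinarith [mul_nonneg hκ.le hk]
  have nonneg : ∀ k, 0 ≤ a k := fun k => by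
    induction k with
    | zero => exact ha
    | succ k ih => exact ih.trans (step k ih)
  exact monotone_nat_of_le_succ fun k => step k (nonneg k)

lemma mul_div_le_div_succ_sub_div (hk : κ * a k ≤ (k + 1) * (a (k + 1) - a k)) :
    (κ - 1) * (a k / (k + 1)) / (k + 2) ≤ a (k + 1) / (k + 2) - a k / (k + 1) := by
  rw [div_sub_div _ _ (by positivity) (by positivity),
    div_le_div_iff₀ (by positivity) (by positivity)]
  field_simp
  nlinarith

lemma sub_div_le_mul_div_succ_sub_div (hκ : 1 < κ) (ha : 0 ≤ a k)
    (hk : κ * a k ≤ (k + 1) * (a (k + 1) - a k)) :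
    (a (k + 1) - a k) / (k + 1) ≤
      2 * κ / (κ - 1) * (a (k + 1) / (k + 2) - a k / (k + 1)) := by
  have hκ0 : 0 < κ - 1 := sub_pos.2 hκ
  have hd : 0 ≤ a (k + 1) - a k := by nlinarith
  rw [div_sub_div _ _ (by positivity) (by positivity), div_mul_div_comm,
    div_le_div_iff₀ (by positivity) (by positivity)]
  have hk1 : (0 : ℝ) ≤ k + 1 := by positivity
  nlinarith [mul_le_mul_of_nonneg_right hk hk1,
    mul_nonneg (mul_nonneg hκ0.le hd) (mul_nonneg (Nat.cast_nonneg (α := ℝ) k) hk1)]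

lemma tendsto_div_succ_atTop (hκ : 1 < κ) (ha : 0 < a 0)
    (h : ∀ k : ℕ, κ * a k ≤ (k + 1) * (a (k + 1) - a k)) :
    Tendsto (fun m : ℕ => a m / (m + 1)) atTop atTop := by
  set r : ℕ → ℝ := fun m => a m / (m + 1)
  have hinc : ∀ k, (κ - 1) * r k / (k + 2) ≤ r (k + 1) - r k := fun k => by
    simpa [r, add_assoc, one_add_one_eq_two] using mul_div_le_div_succ_sub_div (h k)
  have hr : Monotone r := by
    have ha' := monotone_of_mul_le_succ_mul_sub (by linarith) ha.le h
    refine monotone_nat_of_le_succ fun k => sub_nonneg.1 ((hinc k).trans' ?_)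
    have : 0 ≤ r k := div_nonneg (ha.le.trans (ha' k.zero_le)) (by positivity)
    have : 0 ≤ κ - 1 := by linarith
    positivity
  set ε := (κ - 1) * r 0 / 2
  have hε : 0 < ε := by have := sub_pos.2 hκ; positivity
  have hlow : ∀ m, r 0 + ε * ∑ k ∈ Finset.range m, 1 / ((k : ℝ) + 1) ≤ r m := fun m => by
    rw [← sub_nonneg, ← sub_sub, ← Finset.sum_range_sub, Finset.mul_sum,
      ← Finset.sum_sub_distrib]
    refine Finset.sum_nonneg fun k _ => sub_nonneg.2 ((hinc k).trans' ?_)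
    have hκ1 : 0 ≤ κ - 1 := by linarith
    have hrk : (κ - 1) * r 0 ≤ (κ - 1) * r k := mul_le_mul_of_nonneg_left (hr k.zero_le) hκ1
    calc ε * (1 / ((k : ℝ) + 1)) = (κ - 1) * r 0 / (2 * (k + 1)) := by
          simp only [ε]; field_simp
      _ ≤ (κ - 1) * r k / (k + 2) :=
          div_le_div₀ (hrk.trans' (by positivity)) hrk (by positivity) (by linarith)
  exact tendsto_atTop_mono hlow (tendsto_atTop_add_const_left _ _
    (Real.tendsto_sum_range_one_div_nat_succ_atTop.const_mul_atTop hε))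

lemma sum_range_sub_div_le (hκ : 1 < κ) (ha : 0 ≤ a 0)
    (h : ∀ k : ℕ, κ * a k ≤ (k + 1) * (a (k + 1) - a k)) (m : ℕ) :
    ∑ j ∈ Finset.range m, (a (j + 1) - a j) / (j + 1) ≤
      2 * κ / (κ - 1) * (a m / (m + 1)) := by
  have hmono := monotone_of_mul_le_succ_mul_sub (by linarith) ha h
  have htel := Finset.sum_range_sub (fun j : ℕ => a j / (j + 1)) m
  push_cast [add_assoc, one_add_one_eq_two] at htel
  calc ∑ j ∈ Finset.range m, (a (j + 1) - a j) / (j + 1)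
      ≤ ∑ j ∈ Finset.range m, 2 * κ / (κ - 1) * (a (j + 1) / (j + 2) - a j / (j + 1)) :=
        Finset.sum_le_sum fun j _ =>
          sub_div_le_mul_div_succ_sub_div hκ (ha.trans (hmono j.zero_le)) (h j)
    _ = 2 * κ / (κ - 1) * (a m / (m + 1) - a 0) := by rw [← Finset.mul_sum, htel]; simp
    _ ≤ 2 * κ / (κ - 1) * (a m / (m + 1)) := by
        have : 0 < κ - 1 := by linarith
        gcongr
        linarith

lemma tendsto_succ_div_nhds_zero (hκ : 1 < κ) (ha : 0 < a 0)
    (h : ∀ k : ℕ, κ * a k ≤ (k + 1) * (a (k + 1) - a k)) :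
    Tendsto (fun m : ℕ => (m + 1) / a m) atTop (𝓝 0) := by
  simpa only [Pi.inv_def, inv_div] using (tendsto_div_succ_atTop hκ ha h).inv_tendsto_atTop

lemma tendsto_succ_div_mul_sum_range (hκ : 1 < κ) (ha : 0 < a 0)
    (h : ∀ k : ℕ, κ * a k ≤ (k + 1) * (a (k + 1) - a k)) {x : ℕ → ℝ}
    (hx : Tendsto x atTop (𝓝 0)) :
    Tendsto (fun m : ℕ => (m + 1) / a m *
      ∑ j ∈ Finset.range m, (a (j + 1) - a j) / (j + 1) * x j) atTop (𝓝 0) := by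
  have hmono := monotone_of_mul_le_succ_mul_sub (by linarith) ha.le h
  have hpos : ∀ m, 0 < a m := fun m => ha.trans_le (hmono m.zero_le)
  have hw : ∀ m j, 0 ≤ (m + 1) / a m * ((a (j + 1) - a j) / (j + 1)) := fun m j => by
    have := sub_nonneg.2 (hmono j.le_succ)
    have := hpos m
    positivity
  simp only [Finset.mul_sum, ← mul_assoc]
  refine tendsto_sum_range_mul_of_tendsto_zero (B := 2 * κ / (κ - 1)) hw (fun m => ?_)
    (fun j => by simpa using (tendsto_succ_div_nhds_zero hκ ha h).mul_const _) hx
  rw [← Finset.mul_sum]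
  calc (m + 1) / a m * ∑ j ∈ Finset.range m, (a (j + 1) - a j) / (j + 1)
      ≤ (m + 1) / a m * (2 * κ / (κ - 1) * (a m / (m + 1))) := by
        have := hpos m
        gcongr
        exact sum_range_sub_div_le hκ ha.le h m
    _ = 2 * κ / (κ - 1) := by
        have := (hpos m).ne'
        field_simp

end Growth

lemma min_sq_le_min_sq_add_ite {a b : ℝ} (ha : 0 ≤ a) (hab : a ≤ b) (x : ℝ) :
    min (x ^ 2) (b ^ 2) ≤ min (x ^ 2) (a ^ 2) + if a < |x| then b ^ 2 - a ^ 2 else 0 := by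
  split_ifs with hx
  · have : a ^ 2 ≤ x ^ 2 := by rw [← sq_abs x]; gcongr
    rw [min_eq_right this]
    linarith [min_le_right (x ^ 2) (b ^ 2)]
  · have : x ^ 2 ≤ a ^ 2 := by rw [← sq_abs x]; gcongr; exact not_lt.1 hx
    rw [min_eq_left this, min_eq_left (this.trans (by gcongr)), add_zero]

lemma min_sq_le_sum_ite {t : ℕ → ℝ} (ht0 : 0 ≤ t 0) (ht : Monotone t) (x : ℝ) (m : ℕ) :
    min (x ^ 2) (t m ^ 2) ≤
      t 0 ^ 2 + ∑ j ∈ Finset.range m, if t j < |x| then t (j + 1) ^ 2 - t j ^ 2 else 0 := by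
  induction m with
  | zero => simp
  | succ m ih =>
    rw [Finset.sum_range_succ, ← add_assoc]
    exact (min_sq_le_min_sq_add_ite (ht0.trans (ht m.zero_le)) (ht m.le_succ) x).trans
      (add_le_add_left ih _)

lemma setIntegral_sq_le_add_sum {P : Measure Ω} [IsProbabilityMeasure P] {Z : Ω → ℝ}
    (hZ : Measurable Z) {t : ℕ → ℝ} (ht0 : 0 ≤ t 0) (ht : Monotone t) (m : ℕ) :
    ∫ ω in {ω | |Z ω| ≤ t m}, Z ω ^ 2 ∂P ≤
      t 0 ^ 2 +
        ∑ j ∈ Finset.range m, (t (j + 1) ^ 2 - t j ^ 2) * (P {ω | t j < |Z ω|}).toReal := by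
  have hE : ∀ j, MeasurableSet {ω | t j < |Z ω|} := fun j =>
    measurableSet_lt measurable_const hZ.abs
  have hmin : Integrable (fun ω => min (Z ω ^ 2) (t m ^ 2)) P := by
    refine (integrable_const (t m ^ 2)).mono'
      ((hZ.pow_const 2).min measurable_const).aestronglyMeasurable (ae_of_all _ fun ω => ?_)
    rw [Real.norm_eq_abs, abs_of_nonneg (le_min (sq_nonneg _) (sq_nonneg _))]
    exact min_le_right _ _
  have hind : ∀ j,
      Integrable ({ω | t j < |Z ω|}.indicator fun _ => t (j + 1) ^ 2 - t j ^ 2) P :=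
    fun j => (integrable_const _).indicator (hE j)
  calc ∫ ω in {ω | |Z ω| ≤ t m}, Z ω ^ 2 ∂P
      = ∫ ω in {ω | |Z ω| ≤ t m}, min (Z ω ^ 2) (t m ^ 2) ∂P := by
        refine setIntegral_congr_fun (measurableSet_le hZ.abs measurable_const) fun ω hω => ?_
        rw [min_eq_left]
        rw [← sq_abs (Z ω)]
        exact pow_le_pow_left₀ (abs_nonneg _) hω 2
    _ ≤ ∫ ω, min (Z ω ^ 2) (t m ^ 2) ∂P :=
        setIntegral_le_integral hmin (ae_of_all _ fun ω => le_min (sq_nonneg _) (sq_nonneg _))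
    _ ≤ ∫ ω, t 0 ^ 2 + ∑ j ∈ Finset.range m,
          {ω | t j < |Z ω|}.indicator (fun _ => t (j + 1) ^ 2 - t j ^ 2) ω ∂P := by
        refine integral_mono hmin
          ((integrable_const _).add (integrable_finsetSum _ fun j _ => hind j)) fun ω => ?_
        simpa [Set.indicator_apply] using min_sq_le_sum_ite ht0 ht (Z ω) m
    _ = _ := by
        rw [integral_add (integrable_const _) (integrable_finsetSum _ fun j _ => hind j),
          integral_finsetSum _ fun j _ => hind j]
        simp [integral_indicator_const _ (hE _), measureReal_def, mul_comm]

theorem stmt11 (P : Measure Ω) [IsProbabilityMeasure P] (Z : Ω → ℝ) (hZ : Measurable Z)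
    (c : ℕ → ℝ) (hc : ∀ n, 0 < c n) (cc : ℝ) (hcc : 1 < cc)
    (hyp : ∀ n : ℕ, 1 < n →
      cc ≤ ((n : ℝ) - 1) / (c (n - 1)) ^ 2 * ((c n) ^ 2 - (c (n - 1)) ^ 2))
    (htail : Tendsto (fun n : ℕ => (n : ℝ) * (P {ω | c n < |Z ω|}).toReal) atTop (nhds 0)) :
    Tendsto (fun n : ℕ =>
      (n : ℝ) / (c n) ^ 2 * ∫ ω in {ω | |Z ω| ≤ c n}, (Z ω) ^ 2 ∂P) atTop (nhds 0) := by
  set a : ℕ → ℝ := fun k => c (k + 1) ^ 2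
  have ha : 0 < a 0 := pow_pos (hc 1) 2
  have hstep : ∀ k : ℕ, cc * a k ≤ (k + 1) * (a (k + 1) - a k) := fun k => by
    have h := hyp (k + 2) (by omega)
    rw [show k + 2 - 1 = k + 1 from rfl, div_mul_eq_mul_div, le_div_iff₀ (pow_pos (hc _) 2)] at h
    push_cast at h
    linarith
  have hmono : Monotone fun k => c (k + 1) := fun i j hij =>
    (pow_le_pow_iff_left₀ (hc _).le (hc _).le two_ne_zero).1
      (monotone_of_mul_le_succ_mul_sub (by linarith) ha.le hstep hij)
  have hbound := ((tendsto_succ_div_nhds_zero hcc ha hstep).mul_const (a 0)).add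
    (tendsto_succ_div_mul_sum_range hcc ha hstep ((tendsto_add_atTop_iff_nat 1).2 htail))
  rw [zero_mul, zero_add] at hbound
  rw [← tendsto_add_atTop_iff_nat 1]
  refine squeeze_zero (fun m => ?_) (fun m => ?_) hbound
  · exact mul_nonneg (by positivity) (integral_nonneg fun ω => sq_nonneg _)
  · calc _ ≤ (m + 1) / a m * (a 0 + ∑ j ∈ Finset.range m,
            (a (j + 1) - a j) * (P {ω | c (j + 1) < |Z ω|}).toReal) := by
          push_cast
          exact mul_le_mul_of_nonneg_left (setIntegral_sq_le_add_sum hZ (hc 1).le hmono m)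
            (by positivity)
      _ = _ := by
          rw [mul_add]
          congr 2
          refine Finset.sum_congr rfl fun j _ => ?_
          push_cast
          field_simp
end
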